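/- arXiv:2602.16517 — 6 statements merged into one kernel-verified Lean document; each statement's English description precedes it below -/
import Mathlib

section
/- Let f : [−1,1]² → ℝ be a C² function with a critical point at the origin, such that neither the partial function y ↦ f(0,y) nor x ↦ f(x,0) is constant, and suppose there is C < ∞ such that for every (x,y) ∈ [−1,1]²: f(x,y) − inf_{x'∈[−1,1]} f(x',y) ≤ C|∂_x f(x,y)|² and sup_{y'∈[−1,1]} f(x,y') − f(x,y) ≤ C|∂_y f(x,y)|². Then there exists r > 0 such that for every initial condition z(0) in the open Euclidean ball B_r of radius r centered at the origin, the gradient descent-ascent flow z solving z'(t) = (−∂_x f(z(t)), ∂_y f(z(t))) converges to the origin as t → ∞. -/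
open Set Filter

/-- Partial derivative in the first variable. -/
noncomputable def pdx (f : ℝ × ℝ → ℝ) (p : ℝ × ℝ) : ℝ :=
  deriv (fun x => f (x, p.2)) p.1

/-- Partial derivative in the second variable. -/
noncomputable def pdy (f : ℝ × ℝ → ℝ) (p : ℝ × ℝ) : ℝ :=
  deriv (fun y => f (p.1, y)) p.2

/-- The square `[-1,1]²`. -/
def Sq : Set (ℝ × ℝ) := Icc (-1) 1 ×ˢ Icc (-1) 1

open Topology

/-!
A `C²` function `g ≥ 0` of one variable satisfying the Polyak–Łojasiewicz (PL) inequality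
`g ≤ C g'²`, vanishing at `s` but not identically zero, has `g''(s) ≥ 1/(2C)`. Past the last
zero `t` before a point `p` with `g(p) > 0`, the slope of `√g` is at least `1/(2√C)` in absolute
value, so `g(p) ≥ (p - t)²/(4C)`, while Taylor's formula at the double zero `t` gives
`g(p) = g''(ξ)(p - t)²/2`; letting `p` approach the zero set from outside gives the bound by
continuity of `g''` (a zero set with interior would force `g'' = 0` at its end point).

Applied to `f(·, 0) - f(0, 0) ≥ 0` and `f(0, 0) - f(0, ·) ≥ 0`, this makes the Jacobian `L` of the
GDA field `(-∂ₓf, ∂ᵧf)` at the origin satisfy `⟪v, L v⟫ = -∂ₓₓf(0) v₁² + ∂ᵧᵧf(0) v₂² ≤ -|v|²/(2C)`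
(the mixed partials cancel by symmetry of the Hessian). Hence `|z|²` decays exponentially along
the flow as long as it is small, and it stays small.
-/

section PL

variable {g g' g'' : ℝ → ℝ} {a b C s p : ℝ}

lemma sq_div_le_of_PL (hsp : s < p) (hcont : ContinuousOn g (Icc s p))
    (hg : ∀ x ∈ Ioo s p, HasDerivAt g (g' x) x) (hs : g s = 0)
    (hpos : ∀ x ∈ Ioc s p, 0 < g x) (hPL : ∀ x ∈ Ioo s p, g x ≤ C * g' x ^ 2) :
    (p - s) ^ 2 / (4 * C) ≤ g p := by
  obtain ⟨ξ, hξ, hslope⟩ := exists_hasDerivAt_eq_slope (fun x => √(g x))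
    (fun x => g' x / (2 * √(g x))) hsp (Real.continuous_sqrt.comp_continuousOn hcont)
    (fun x hx => (hg x hx).sqrt (hpos x (Ioo_subset_Ioc_self hx)).ne')
  have hgξ := hpos ξ (Ioo_subset_Ioc_self hξ)
  have hPLξ := hPL ξ hξ
  have hC : 0 < C := pos_of_mul_pos_left (hgξ.trans_le hPLξ) (sq_nonneg _)
  have hgp : g p = (p - s) ^ 2 * (g' ξ ^ 2 / (4 * g ξ)) := by
    rw [hs, Real.sqrt_zero, sub_zero, eq_div_iff (sub_pos.2 hsp).ne'] at hslope
    rw [← Real.sq_sqrt (hpos p ⟨hsp, le_rfl⟩).le, ← hslope, mul_pow, div_pow, mul_pow,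
      Real.sq_sqrt hgξ.le]
    ring
  rw [hgp, div_eq_mul_one_div]
  refine mul_le_mul_of_nonneg_left ?_ (sq_nonneg _)
  rw [div_le_div_iff₀ (by positivity) (by positivity)]
  linarith

lemma exists_eq_mul_sq_of_deriv_eq_zero (hsp : s < p) (hcont : ContinuousOn g (Icc s p))
    (hg : ∀ x ∈ Ico s p, HasDerivAt g (g' x) x) (hg' : ∀ x ∈ Ico s p, HasDerivAt g' (g'' x) x)
    (hs : g s = 0) (hs' : g' s = 0) :
    ∃ ξ ∈ Ioo s p, g p = g'' ξ * (p - s) ^ 2 / 2 := by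
  obtain ⟨c, hc, hcauchy⟩ := exists_ratio_hasDerivAt_eq_ratio_slope g g' hsp hcont
    (fun x hx => hg x (Ioo_subset_Ico_self hx)) (fun x => (x - s) ^ 2) (fun x => 2 * (x - s))
    (by fun_prop) (fun x _ => by simpa using ((hasDerivAt_id x).sub_const s).fun_pow 2)
  obtain ⟨ξ, hξ, hslope⟩ := exists_hasDerivAt_eq_slope g' g'' hc.1
    (fun x hx => (hg' x ⟨hx.1, hx.2.trans_lt hc.2⟩).continuousAt.continuousWithinAt)
    (fun x hx => hg' x ⟨hx.1.le, hx.2.trans hc.2⟩)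
  refine ⟨ξ, ⟨hξ.1, hξ.2.trans hc.2⟩, ?_⟩
  rw [hs', sub_zero, eq_div_iff (sub_pos.2 hc.1).ne'] at hslope
  simp only [hs, sub_self, sub_zero] at hcauchy
  have hcs : 0 < c - s := sub_pos.2 hc.1
  rw [← hslope] at hcauchy
  field_simp
  nlinarith [hcauchy]

lemma eqOn_zero_of_hasDerivAt {U : Set ℝ} (hU : IsOpen U) (hg : ∀ x ∈ U, HasDerivAt g (g' x) x)
    (h0 : EqOn g 0 U) : EqOn g' 0 U := fun x hx =>
  (hg x hx).unique <| (hasDerivAt_const x 0).congr_of_eventuallyEq <|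
    eventually_of_mem (hU.mem_nhds hx) h0

lemma exists_one_div_le_of_PL (hg : ∀ x ∈ Ioo a b, HasDerivAt g (g' x) x)
    (hg' : ∀ x ∈ Ioo a b, HasDerivAt g' (g'' x) x) (hnonneg : ∀ x ∈ Ioo a b, 0 ≤ g x)
    (hPL : ∀ x ∈ Ioo a b, g x ≤ C * g' x ^ 2) (hs : s ∈ Ioo a b) (hp : p ∈ Ioo a b)
    (hsp : s < p) (hgs : g s = 0) (hgp : 0 < g p) :
    ∃ ξ ∈ Ioo s p, 1 / (2 * C) ≤ g'' ξ := by
  have hsub : Icc s p ⊆ Ioo a b := Icc_subset_Ioo hs.1 hp.2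
  have hcont : ContinuousOn g (Icc s p) := fun x hx =>
    (hg x (hsub hx)).continuousAt.continuousWithinAt
  set Z := Icc s p ∩ g ⁻¹' {0}
  have hZ : IsClosed Z := hcont.preimage_isClosed_of_isClosed isClosed_Icc isClosed_singleton
  have hZbdd : BddAbove Z := bddAbove_Icc.mono inter_subset_left
  set t := sSup Z
  obtain ⟨⟨hst, htp⟩, hgt⟩ : t ∈ Z := hZ.csSup_mem ⟨s, left_mem_Icc.2 hsp.le, hgs⟩ hZbdd
  replace htp : t < p := htp.lt_of_ne fun h => hgp.ne' (h ▸ hgt)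
  have htI : Icc t p ⊆ Ioo a b := (Icc_subset_Icc_left hst).trans hsub
  have hpos : ∀ x ∈ Ioc t p, 0 < g x := fun x hx =>
    (hnonneg x (htI (Ioc_subset_Icc_self hx))).lt_of_ne' fun h =>
      hx.1.not_ge (le_csSup hZbdd ⟨⟨hst.trans hx.1.le, hx.2⟩, h⟩)
  have hg't : g' t = 0 := by
    refine IsLocalMin.hasDerivAt_eq_zero ?_ (hg t (htI (left_mem_Icc.2 htp.le)))
    filter_upwards [isOpen_Ioo.mem_nhds (htI (left_mem_Icc.2 htp.le))] with y hy
    exact hgt ▸ hnonneg y hy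
  have hgrowth := sq_div_le_of_PL htp (hcont.mono (Icc_subset_Icc_left hst))
    (fun x hx => hg x (htI (Ioo_subset_Icc_self hx))) hgt hpos
    (fun x hx => hPL x (htI (Ioo_subset_Icc_self hx)))
  obtain ⟨ξ, hξ, hgp_eq⟩ := exists_eq_mul_sq_of_deriv_eq_zero htp
    (hcont.mono (Icc_subset_Icc_left hst)) (fun x hx => hg x (htI (Ico_subset_Icc_self hx)))
    (fun x hx => hg' x (htI (Ico_subset_Icc_self hx))) hgt hg't
  refine ⟨ξ, ⟨hst.trans_lt hξ.1, hξ.2⟩, ?_⟩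
  have hC : 0 < C := pos_of_mul_pos_left (hgp.trans_le (hPL p hp)) (sq_nonneg _)
  have hpt : 0 < (p - t) ^ 2 := by have := sub_pos.2 htp; positivity
  rw [hgp_eq, div_le_iff₀ (by positivity)] at hgrowth
  rw [div_le_iff₀ (by positivity)]
  nlinarith

lemma one_div_le_of_PL_of_pos_right (hg : ∀ x ∈ Ioo a b, HasDerivAt g (g' x) x)
    (hg' : ∀ x ∈ Ioo a b, HasDerivAt g' (g'' x) x) (hg'' : ContinuousOn g'' (Ioo a b))
    (hnonneg : ∀ x ∈ Ioo a b, 0 ≤ g x) (hPL : ∀ x ∈ Ioo a b, g x ≤ C * g' x ^ 2)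
    (hs : s ∈ Ioo a b) (hp : p ∈ Ioo a b) (hsp : s < p) (hgs : g s = 0) (hgp : 0 < g p) :
    1 / (2 * C) ≤ g'' s := by
  have hC : 0 < C := pos_of_mul_pos_left (hgp.trans_le (hPL p hp)) (sq_nonneg _)
  have hsub : Icc s p ⊆ Ioo a b := Icc_subset_Ioo hs.1 hp.2
  set P := {x ∈ Icc s p | 0 < g x}
  have hPne : P.Nonempty := ⟨p, right_mem_Icc.2 hsp.le, hgp⟩
  have hPbdd : BddBelow P := ⟨s, fun x hx => hx.1.1⟩
  set v := sInf P
  have hsv : s ≤ v := le_csInf hPne fun x hx => hx.1.1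
  have hvp : v ≤ p := csInf_le hPbdd ⟨right_mem_Icc.2 hsp.le, hgp⟩
  have hvI : v ∈ Ioo a b := hsub ⟨hsv, hvp⟩
  have hflat : EqOn g 0 (Icc s v) := by
    rcases hsv.eq_or_lt with hsv | hsv
    · rw [← hsv, Icc_self, eqOn_singleton]
      exact hgs
    have hIco : EqOn g 0 (Ico s v) := fun x hx =>
      le_antisymm (not_lt.1 fun h => hx.2.not_ge (csInf_le hPbdd ⟨⟨hx.1, hx.2.le.trans hvp⟩, h⟩))
        (hnonneg x (hsub ⟨hx.1, hx.2.le.trans hvp⟩))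
    refine hIco.of_subset_closure (fun x hx => ?_) continuousOn_const Ico_subset_Icc_self
      (closure_Ico hsv.ne).symm.subset
    exact (hg x (hsub ⟨hx.1, hx.2.trans hvp⟩)).continuousAt.continuousWithinAt
  have hv : 1 / (2 * C) ≤ g'' v := by
    by_contra! hlt
    obtain ⟨ε, hε, hball⟩ := Metric.eventually_nhds_iff.1 <|
      (hg''.continuousAt (isOpen_Ioo.mem_nhds hvI)).eventually_lt continuousAt_const hlt
    obtain ⟨q, hqP, hqv⟩ := exists_lt_of_csInf_lt hPne (lt_add_of_pos_right v hε)
    have hgv : g v = 0 := hflat (right_mem_Icc.2 hsv)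
    have hvq : v < q := (csInf_le hPbdd hqP).lt_of_ne (by rintro rfl; exact hqP.2.ne' hgv)
    obtain ⟨ξ, hξ, hξC⟩ := exists_one_div_le_of_PL hg hg' hnonneg hPL hvI
      (hsub ⟨hsv.trans hvq.le, hqP.1.2⟩) hvq hgv hqP.2
    refine (hball ?_).not_ge hξC
    rw [Real.dist_eq, abs_lt]
    constructor <;> linarith [hξ.1, hξ.2]
  rcases hsv.eq_or_lt with hsv | hsv
  · rwa [hsv]
  have hsvI : Ioo s v ⊆ Ioo a b := Ioo_subset_Ioo hs.1.le (hvp.trans hp.2.le)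
  have hg''0 : EqOn g'' 0 (Ioo s v) :=
    eqOn_zero_of_hasDerivAt isOpen_Ioo (fun x hx => hg' x (hsvI hx)) <|
      eqOn_zero_of_hasDerivAt isOpen_Ioo (fun x hx => hg x (hsvI hx))
        (hflat.mono Ioo_subset_Icc_self)
  have hg''v : g'' v = 0 :=
    hg''0.of_subset_closure (hg''.mono (Icc_subset_Ioo hs.1 (hvp.trans_lt hp.2)))
      continuousOn_const Ioo_subset_Icc_self (closure_Ioo hsv.ne).symm.subset
      (right_mem_Icc.2 hsv.le)
  linarith [show 0 < 1 / (2 * C) by positivity]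

lemma one_div_le_of_PL (hg : ∀ x ∈ Ioo a b, HasDerivAt g (g' x) x)
    (hg' : ∀ x ∈ Ioo a b, HasDerivAt g' (g'' x) x) (hg'' : ContinuousOn g'' (Ioo a b))
    (hnonneg : ∀ x ∈ Ioo a b, 0 ≤ g x) (hPL : ∀ x ∈ Ioo a b, g x ≤ C * g' x ^ 2)
    (hs : s ∈ Ioo a b) (hp : p ∈ Ioo a b) (hgs : g s = 0) (hgp : 0 < g p) :
    1 / (2 * C) ≤ g'' s := by
  rcases lt_or_gt_of_ne (show s ≠ p by rintro rfl; exact hgp.ne' hgs) with hsp | hps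
  · exact one_div_le_of_PL_of_pos_right hg hg' hg'' hnonneg hPL hs hp hsp hgs hgp
  have hneg : ∀ x ∈ Ioo (-b) (-a), -x ∈ Ioo a b := fun x hx => ⟨lt_neg.1 hx.2, neg_lt.1 hx.1⟩
  have hcomp : ∀ {h h' : ℝ → ℝ}, (∀ x ∈ Ioo a b, HasDerivAt h (h' x) x) →
      ∀ x ∈ Ioo (-b) (-a), HasDerivAt (fun y => h (-y)) (-h' (-x)) x := fun hh x hx => by
    simpa [Function.comp_def] using (hh (-x) (hneg x hx)).comp x (hasDerivAt_neg x)
  simpa using one_div_le_of_PL_of_pos_right (g := fun x => g (-x)) (g' := fun x => -g' (-x))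
    (g'' := fun x => g'' (-x)) (s := -s) (p := -p) (hcomp hg)
    (fun x hx => by simpa using (hcomp hg' x hx).fun_neg)
    (hg''.comp continuousOn_neg fun x hx => hneg x hx) (fun x hx => hnonneg _ (hneg x hx))
    (fun x hx => by simpa using hPL _ (hneg x hx)) ⟨neg_lt_neg hs.2, neg_lt_neg hs.1⟩
    ⟨neg_lt_neg hp.2, neg_lt_neg hp.1⟩ (neg_lt_neg hps) (by simpa using hgs) (by simpa using hgp)

end PL

theorem one_div_le_deriv_deriv_of_PL {φ : ℝ → ℝ} {a b C s : ℝ} (hφ : ContDiffOn ℝ 2 φ (Icc a b))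
    (hPL : ∀ x ∈ Icc a b, φ x - sInf (φ '' Icc a b) ≤ C * deriv φ x ^ 2)
    (hs : s ∈ Ioo a b) (hcrit : deriv φ s = 0)
    (hne : ∃ x₁ ∈ Icc a b, ∃ x₂ ∈ Icc a b, φ x₁ ≠ φ x₂) :
    0 < C ∧ 1 / (2 * C) ≤ deriv (deriv φ) s := by
  have hφo : ContDiffOn ℝ 2 φ (Ioo a b) := hφ.mono Ioo_subset_Icc_self
  have hφ' : ContDiffOn ℝ 1 (deriv φ) (Ioo a b) := hφo.deriv_of_isOpen isOpen_Ioo (by norm_num)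
  have hasDeriv : ∀ {ψ : ℝ → ℝ} {n : WithTop ℕ∞}, ContDiffOn ℝ n ψ (Ioo a b) → n ≠ 0 →
      ∀ x ∈ Ioo a b, HasDerivAt ψ (deriv ψ x) x := fun hψ hn x hx =>
    ((hψ.differentiableOn hn).differentiableAt (isOpen_Ioo.mem_nhds hx)).hasDerivAt
  have hbdd : BddBelow (φ '' Icc a b) := isCompact_Icc.bddBelow_image hφ.continuousOn
  have hmin : sInf (φ '' Icc a b) = φ s := by
    refine le_antisymm (csInf_le hbdd ⟨s, Ioo_subset_Icc_self hs, rfl⟩) ?_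
    have := hPL s (Ioo_subset_Icc_self hs)
    rw [hcrit] at this
    linarith
  have hmin' : ∀ x ∈ Icc a b, φ s ≤ φ x := fun x hx => hmin ▸ csInf_le hbdd ⟨x, hx, rfl⟩
  obtain ⟨p, hp, hsp⟩ : ∃ p ∈ Ioo a b, φ s < φ p := by
    by_contra! h
    have hconst : EqOn φ (fun _ => φ s) (Icc a b) :=
      EqOn.of_subset_closure (fun x hx => le_antisymm (h x hx) (hmin' x (Ioo_subset_Icc_self hx)))
        hφ.continuousOn continuousOn_const Ioo_subset_Icc_self
        (closure_Ioo (hs.1.trans hs.2).ne).symm.subset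
    obtain ⟨x₁, h₁, x₂, h₂, hne⟩ := hne
    exact hne ((hconst h₁).trans (hconst h₂).symm)
  have hC : 0 < C := by
    have := hPL p (Ioo_subset_Icc_self hp)
    rw [hmin] at this
    exact pos_of_mul_pos_left ((sub_pos.2 hsp).trans_le this) (sq_nonneg _)
  refine ⟨hC, one_div_le_of_PL (g := fun x => φ x - φ s)
    (fun x hx => (hasDeriv hφo (by norm_num) x hx).sub_const _) (hasDeriv hφ' (by norm_num))
    (hφ'.continuousOn_deriv_of_isOpen isOpen_Ioo le_rfl)
    (fun x hx => sub_nonneg.2 (hmin' x (Ioo_subset_Icc_self hx)))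
    (fun x hx => hmin ▸ hPL x (Ioo_subset_Icc_self hx)) hs hp (sub_self _) (sub_pos.2 hsp)⟩

theorem deriv_deriv_le_neg_one_div_of_PL {φ : ℝ → ℝ} {a b C s : ℝ}
    (hφ : ContDiffOn ℝ 2 φ (Icc a b))
    (hPL : ∀ x ∈ Icc a b, sSup (φ '' Icc a b) - φ x ≤ C * deriv φ x ^ 2)
    (hs : s ∈ Ioo a b) (hcrit : deriv φ s = 0)
    (hne : ∃ x₁ ∈ Icc a b, ∃ x₂ ∈ Icc a b, φ x₁ ≠ φ x₂) :
    0 < C ∧ deriv (deriv φ) s ≤ -(1 / (2 * C)) := by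
  have hd : deriv (fun x => -φ x) = fun x => -deriv φ x := deriv.fun_neg'
  have himage : (fun x => -φ x) '' Icc a b = -(φ '' Icc a b) := by
    rw [← Set.image_neg_eq_neg, Set.image_image]
  obtain ⟨x₁, h₁, x₂, h₂, hne⟩ := hne
  obtain ⟨hC, h⟩ := one_div_le_deriv_deriv_of_PL (φ := fun x => -φ x) hφ.neg
    (fun x hx => by simpa [himage, Real.sInf_neg, hd, add_comm] using hPL x hx) hs
    (by simp [hd, hcrit]) ⟨x₁, h₁, x₂, h₂, by simpa using hne⟩
  rw [hd, deriv.fun_neg] at h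
  exact ⟨hC, by linarith⟩

lemma le_mul_exp_of_hasDerivWithinAt {V V' : ℝ → ℝ} {c R : ℝ} (hc : 0 < c) (hR : 0 < R)
    (hV : ∀ t ∈ Ici (0 : ℝ), HasDerivWithinAt V (V' t) (Ici 0) t) (h0 : V 0 < R)
    (hdecay : ∀ t ∈ Ici (0 : ℝ), V t < R → V' t ≤ -(2 * c) * V t) :
    ∀ t ∈ Ici (0 : ℝ), V t ≤ R * Real.exp (-(c * t)) := by
  -- Where `V` touches the barrier `R e^{-ct}` we have `V < R`, hence `V' ≤ -2cV < -cV`.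
  intro T hT
  have hB : ∀ t, HasDerivAt (fun t => R * Real.exp (-(c * t))) (-c * (R * Real.exp (-(c * t)))) t :=
    fun t => ((((hasDerivAt_id' t).const_mul c).fun_neg.exp).const_mul R).congr_deriv (by ring)
  refine image_le_of_deriv_right_lt_deriv_boundary' (a := 0) (b := T)
    (fun t ht => (hV t ht.1).continuousWithinAt.mono Icc_subset_Ici_self)
    (fun t ht => (hV t ht.1).mono (Ici_subset_Ici.2 ht.1)) (by simpa using h0.le)
    (fun t _ => (hB t).continuousAt.continuousWithinAt) (fun t _ => (hB t).hasDerivWithinAt)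
    (fun t ht hVB => ?_) ⟨hT, le_rfl⟩
  have hBpos : 0 < R * Real.exp (-(c * t)) := by positivity
  have hVR : V t < R := by
    rcases ht.1.eq_or_lt with rfl | htpos
    · exact h0
    · rw [hVB]
      exact mul_lt_of_lt_one_right hR (Real.exp_lt_one_iff.2 (by nlinarith))
  have := hdecay t ht.1 hVR
  rw [hVB] at this
  nlinarith

section Flow

variable {E : Type*} [NormedAddCommGroup E] [InnerProductSpace ℝ E]

theorem tendsto_zero_of_inner_le_neg_mul_norm_sq {F : E → E} {z : ℝ → E} {c ρ : ℝ} (hc : 0 < c)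
    (hF : ∀ p, ‖p‖ < ρ → inner ℝ p (F p) ≤ -c * ‖p‖ ^ 2) (hz0 : ‖z 0‖ < ρ)
    (hz : ∀ t ∈ Ici (0 : ℝ), HasDerivWithinAt z (F (z t)) (Ici 0) t) :
    Tendsto z atTop (𝓝 0) := by
  have hρ : 0 < ρ := (norm_nonneg _).trans_lt hz0
  have hV := le_mul_exp_of_hasDerivWithinAt (V := fun t => ‖z t‖ ^ 2) hc (pow_pos hρ 2)
    (fun t ht => (hz t ht).norm_sq) (by gcongr) fun t _ ht => by
      have := hF (z t) (by simpa [sq_lt_sq₀ (norm_nonneg _) hρ.le] using ht)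
      linarith
  have hexp : Tendsto (fun t => ρ ^ 2 * Real.exp (-(c * t))) atTop (𝓝 0) := by
    simpa using (Real.tendsto_exp_neg_atTop_nhds_zero.comp
      (tendsto_id.const_mul_atTop hc)).const_mul (ρ ^ 2)
  have hsq : Tendsto (fun t => ‖z t‖ ^ 2) atTop (𝓝 0) :=
    squeeze_zero' (Eventually.of_forall fun t => by positivity)
      (eventually_ge_atTop 0 |>.mono hV) hexp
  rw [tendsto_zero_iff_norm_tendsto_zero]
  simpa [Real.sqrt_sq (norm_nonneg _)] using hsq.sqrt

theorem eventually_inner_le_of_hasFDerivAt {F : E → E} {L : E →L[ℝ] E} {c : ℝ} (hc : 0 < c)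
    (hF : HasFDerivAt F L 0) (hF0 : F 0 = 0) (hL : ∀ v, inner ℝ v (L v) ≤ -c * ‖v‖ ^ 2) :
    ∀ᶠ p in 𝓝 0, inner ℝ p (F p) ≤ -(c / 2) * ‖p‖ ^ 2 := by
  filter_upwards [hF.isLittleO.def (half_pos hc)] with p hp
  simp only [hF0, sub_zero] at hp
  have herr : inner ℝ p (F p - L p) ≤ ‖p‖ * (c / 2 * ‖p‖) :=
    (real_inner_le_norm _ _).trans (mul_le_mul_of_nonneg_left hp (norm_nonneg _))
  rw [inner_sub_right] at herr
  nlinarith [hL p]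

theorem exists_pos_forall_tendsto_zero_of_hasFDerivAt {F : E → E} {L : E →L[ℝ] E} {c : ℝ}
    (hc : 0 < c) (hF : HasFDerivAt F L 0) (hF0 : F 0 = 0)
    (hL : ∀ v, inner ℝ v (L v) ≤ -c * ‖v‖ ^ 2) :
    ∃ ρ > 0, ∀ z : ℝ → E, ‖z 0‖ < ρ →
      (∀ t ∈ Ici (0 : ℝ), HasDerivWithinAt z (F (z t)) (Ici 0) t) → Tendsto z atTop (𝓝 0) := by
  obtain ⟨ρ, hρ, hball⟩ :=
    Metric.eventually_nhds_iff.1 (eventually_inner_le_of_hasFDerivAt hc hF hF0 hL)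
  exact ⟨ρ, hρ, fun z hz0 hz => tendsto_zero_of_inner_le_neg_mul_norm_sq (half_pos hc)
    (fun p hp => hball (by simpa using hp)) hz0 hz⟩

theorem exists_pos_forall_tendsto_zero_of_hasFDerivAt_prod {F : ℝ × ℝ → ℝ × ℝ}
    {L : ℝ × ℝ →L[ℝ] ℝ × ℝ} {c : ℝ} (hc : 0 < c) (hF : HasFDerivAt F L 0) (hF0 : F 0 = 0)
    (hL : ∀ v : ℝ × ℝ, v.1 * (L v).1 + v.2 * (L v).2 ≤ -c * (v.1 ^ 2 + v.2 ^ 2)) :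
    ∃ r > 0, ∀ z : ℝ → ℝ × ℝ, (z 0).1 ^ 2 + (z 0).2 ^ 2 < r ^ 2 →
      (∀ t ∈ Ici (0 : ℝ), HasDerivWithinAt z (F (z t)) (Ici 0) t) → Tendsto z atTop (𝓝 0) := by
  -- `ℝ × ℝ` carries the sup norm; `WithLp 2 (ℝ × ℝ)` is the Euclidean plane.
  set e := WithLp.prodContinuousLinearEquiv 2 ℝ ℝ ℝ
  have hnorm : ∀ w, ‖w‖ ^ 2 = (e w).1 ^ 2 + (e w).2 ^ 2 := fun w => by
    simp [e, WithLp.prod_norm_sq_eq_of_L2]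
  have hinner : ∀ v w, inner ℝ v w = (e v).1 * (e w).1 + (e v).2 * (e w).2 := fun v w => by
    simp [e, WithLp.prod_inner_apply, mul_comm]
  obtain ⟨ρ, hρ, h⟩ := exists_pos_forall_tendsto_zero_of_hasFDerivAt
    (F := e.symm ∘ F ∘ e)
    (L := (e.symm : ℝ × ℝ →L[ℝ] _).comp (L.comp (e : WithLp 2 (ℝ × ℝ) →L[ℝ] ℝ × ℝ))) hc
    (e.symm.hasFDerivAt.comp 0 ((by simpa using hF : HasFDerivAt F L (e 0)).comp 0
      e.hasFDerivAt)) (by simp [hF0])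
    fun v => by simpa [hinner, hnorm] using hL (e v)
  refine ⟨ρ, hρ, fun z hz0 hz => ?_⟩
  have hρ' : ‖e.symm (z 0)‖ < ρ := by
    rw [← sq_lt_sq₀ (norm_nonneg _) hρ.le, hnorm]
    simpa using hz0
  simpa [Function.comp_def] using (e.continuous.tendsto 0).comp (h (e.symm ∘ z) hρ' fun t ht => by
    simpa using e.symm.hasFDerivAt.comp_hasDerivWithinAt t (hz t ht))

end Flow

section GDA

variable {f : ℝ × ℝ → ℝ} {f' : ℝ × ℝ → ℝ × ℝ →L[ℝ] ℝ} {H : ℝ × ℝ →L[ℝ] ℝ × ℝ →L[ℝ] ℝ}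
  {p : ℝ × ℝ}

lemma pdx_eq_of_hasFDerivAt {L : ℝ × ℝ →L[ℝ] ℝ} (h : HasFDerivAt f L p) : pdx f p = L (1, 0) :=
  (h.comp_hasDerivAt p.1 ((hasDerivAt_id p.1).prodMk (hasDerivAt_const p.1 p.2))).deriv

lemma pdy_eq_of_hasFDerivAt {L : ℝ × ℝ →L[ℝ] ℝ} (h : HasFDerivAt f L p) : pdy f p = L (0, 1) :=
  (h.comp_hasDerivAt p.2 ((hasDerivAt_const p.2 p.1).prodMk (hasDerivAt_id p.2))).deriv

lemma hasFDerivAt_pdx (hf : ∀ᶠ q in 𝓝 p, HasFDerivAt f (f' q) q) (hH : HasFDerivAt f' H p) :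
    HasFDerivAt (pdx f) ((ContinuousLinearMap.apply ℝ ℝ ((1, 0) : ℝ × ℝ)).comp H) p := by
  have h := (ContinuousLinearMap.apply ℝ ℝ ((1, 0) : ℝ × ℝ)).hasFDerivAt.comp p hH
  exact h.congr_of_eventuallyEq (hf.mono fun _ hq => pdx_eq_of_hasFDerivAt hq)

lemma hasFDerivAt_pdy (hf : ∀ᶠ q in 𝓝 p, HasFDerivAt f (f' q) q) (hH : HasFDerivAt f' H p) :
    HasFDerivAt (pdy f) ((ContinuousLinearMap.apply ℝ ℝ ((0, 1) : ℝ × ℝ)).comp H) p := by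
  have h := (ContinuousLinearMap.apply ℝ ℝ ((0, 1) : ℝ × ℝ)).hasFDerivAt.comp p hH
  exact h.congr_of_eventuallyEq (hf.mono fun _ hq => pdy_eq_of_hasFDerivAt hq)

lemma exists_hasFDerivAt_gda (hf : ∀ᶠ q in 𝓝 p, HasFDerivAt f (f' q) q)
    (hH : HasFDerivAt f' H p) :
    ∃ L : ℝ × ℝ →L[ℝ] ℝ × ℝ, HasFDerivAt (fun q => (-pdx f q, pdy f q)) L p ∧
      ∀ v : ℝ × ℝ, v.1 * (L v).1 + v.2 * (L v).2 =
        -deriv (fun x => pdx f (x, p.2)) p.1 * v.1 ^ 2 +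
          deriv (fun y => pdy f (p.1, y)) p.2 * v.2 ^ 2 := by
  have hxx : deriv (fun x => pdx f (x, p.2)) p.1 = H (1, 0) (1, 0) :=
    ((hasFDerivAt_pdx hf hH).comp_hasDerivAt (f := fun x => (x, p.2)) p.1
      ((hasDerivAt_id' p.1).prodMk (hasDerivAt_const p.1 p.2))).deriv
  have hyy : deriv (fun y => pdy f (p.1, y)) p.2 = H (0, 1) (0, 1) :=
    ((hasFDerivAt_pdy hf hH).comp_hasDerivAt (f := fun y => (p.1, y)) p.2
      ((hasDerivAt_const p.2 p.1).prodMk (hasDerivAt_id' p.2))).deriv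
  refine ⟨_, (hasFDerivAt_pdx hf hH).neg.prodMk (hasFDerivAt_pdy hf hH), fun v => ?_⟩
  have hv : H v = v.1 • H (1, 0) + v.2 • H (0, 1) := by
    rw [← map_smul, ← map_smul, ← map_add]
    congr 1
    ext <;> simp
  simp [hxx, hyy, hv, second_derivative_symmetric_of_eventually hf hH (1, 0) (0, 1)]
  ring

end GDA

/-- Local convergence: if `f : [-1,1]² → ℝ` is `C²`, has a critical point at the origin,
neither `f(0,·)` nor `f(·,0)` is constant, and `f` satisfies the two-sided PL condition with
constant `C`, then there is `r > 0` such that every GDA flow starting in the open Euclidean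
ball of radius `r` around the origin converges to the origin. -/
theorem statement_2 (f : ℝ × ℝ → ℝ) (C : ℝ)
    (hf : ContDiffOn ℝ 2 f Sq)
    (hcrit : pdx f (0, 0) = 0 ∧ pdy f (0, 0) = 0)
    (hncy : ∃ y₁ ∈ Icc (-1 : ℝ) 1, ∃ y₂ ∈ Icc (-1 : ℝ) 1, f (0, y₁) ≠ f (0, y₂))
    (hncx : ∃ x₁ ∈ Icc (-1 : ℝ) 1, ∃ x₂ ∈ Icc (-1 : ℝ) 1, f (x₁, 0) ≠ f (x₂, 0))
    (hPL : ∀ p ∈ Sq,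
      f p - sInf ((fun x' => f (x', p.2)) '' Icc (-1 : ℝ) 1) ≤ C * (pdx f p) ^ 2 ∧
      sSup ((fun y' => f (p.1, y')) '' Icc (-1 : ℝ) 1) - f p ≤ C * (pdy f p) ^ 2) :
    ∃ r > 0, ∀ z : ℝ → ℝ × ℝ,
      (z 0).1 ^ 2 + (z 0).2 ^ 2 < r ^ 2 →
      (∀ t ∈ Ici (0 : ℝ), z t ∈ Sq ∧
        HasDerivWithinAt z (-(pdx f (z t)), pdy f (z t)) (Ici 0) t) →
      Tendsto z atTop (nhds (0, 0)) := by
  obtain ⟨hcx, hcy⟩ := hcrit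
  have h0 : (0 : ℝ) ∈ Ioo (-1) 1 := by norm_num
  obtain ⟨hC, hxx⟩ := one_div_le_deriv_deriv_of_PL (φ := fun x => f (x, 0))
    (hf.comp (by fun_prop) fun x hx => ⟨hx, Ioo_subset_Icc_self h0⟩)
    (fun x hx => (hPL (x, 0) ⟨hx, Ioo_subset_Icc_self h0⟩).1) h0 hcx hncx
  obtain ⟨-, hyy⟩ := deriv_deriv_le_neg_one_div_of_PL (φ := fun y => f (0, y))
    (hf.comp (by fun_prop) fun y hy => ⟨Ioo_subset_Icc_self h0, hy⟩)
    (fun y hy => (hPL (0, y) ⟨Ioo_subset_Icc_self h0, hy⟩).2) h0 hcy hncy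
  have hf0 : ContDiffAt ℝ 2 f 0 :=
    hf.contDiffAt (prod_mem_nhds (Icc_mem_nhds (by norm_num) (by norm_num))
      (Icc_mem_nhds (by norm_num) (by norm_num)))
  obtain ⟨L, hL, hquad⟩ := exists_hasFDerivAt_gda
    ((hf0.eventually (by simp)).mono fun _ hq => (hq.differentiableAt (by norm_num)).hasFDerivAt)
    ((hf0.fderiv_right (m := 1) (by norm_num)).differentiableAt (by norm_num)).hasFDerivAt
  obtain ⟨r, hr, hconv⟩ := exists_pos_forall_tendsto_zero_of_hasFDerivAt_prod
    (c := 1 / (2 * C)) (by positivity) hL (by simp [← Prod.mk_zero_zero, hcx, hcy])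
    fun v => by
      rw [hquad]
      change -deriv (deriv fun x => f (x, 0)) 0 * v.1 ^ 2 +
        deriv (deriv fun y => f (0, y)) 0 * v.2 ^ 2 ≤ _
      nlinarith [mul_le_mul_of_nonneg_right hxx (sq_nonneg v.1),
        mul_le_mul_of_nonneg_right hyy (sq_nonneg v.2)]
  exact ⟨r, hr, fun z hz0 hz => hconv z hz0 fun t ht => (hz t ht).2⟩
end

section
/- Let I be a compact interval of ℝ and let f : I → ℝ be a C² function that is not constant. If f satisfies the PL condition, i.e. there exists C < ∞ such that f(x) − inf f ≤ C|f'(x)|² for every x ∈ I, then for every x ∈ I the implication holds: f'(x) = 0 implies f''(x) > 0. -/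
/-!
A critical point `x₀` of a PL function is a global minimiser: `f x₀ - min f ≤ C f'(x₀)² = 0`.
By non-constancy `f` exceeds its minimum at some `w`, say `w > x₀` (otherwise reflect `x ↦ -x`);
let `y` be the last minimiser in `[x₀, w]`. On `[x₀, y]` the function is constant, as an interior
maximum above the minimum would be a critical point that is not a minimiser. On `(y, w]` the PL
inequality keeps `f'` away from zero, so `f' > 0` there by the mean value and intermediate value
theorems, and it gives `(√(f - min f))' ≥ 1 / (2√C)`. Hence `f - min f ≥ (z - y)² / (4C)`, and
PL once more gives `f'(z) ≥ (z - y) / (2C)`. So `f''(y) ≥ 1 / (2C) > 0`, which is impossible if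
`f' = 0` on a nontrivial `[x₀, y]`; thus `y = x₀`.
-/

open Set Topology

lemma IsPreconnected.pos_of_ne_zero {X α : Type*} [TopologicalSpace X] [LinearOrder α]
    [TopologicalSpace α] [OrderClosedTopology α] [Zero α] {S : Set X} (hS : IsPreconnected S)
    {φ : X → α} (hφ : ContinuousOn φ S) (hne : ∀ z ∈ S, φ z ≠ 0) {c : X} (hc : c ∈ S)
    (hpos : 0 < φ c) {z : X} (hz : z ∈ S) : 0 < φ z := by
  by_contra! hz0
  obtain ⟨x, hx, hx0⟩ := hS.intermediate_value hz hc hφ ⟨hz0, hpos.le⟩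
  exact hne x hx hx0

lemma ContinuousOn.exists_last_eq {f : ℝ → ℝ} {a b m : ℝ} (hf : ContinuousOn f (Icc a b))
    (hab : a ≤ b) (ha : f a = m) (hb : f b ≠ m) :
    ∃ y ∈ Ico a b, f y = m ∧ ∀ z ∈ Ioc y b, f z ≠ m := by
  set T := Icc a b ∩ f ⁻¹' {m}
  have hT : IsClosed T := hf.preimage_isClosed_of_isClosed isClosed_Icc isClosed_singleton
  have hTbdd : BddAbove T := ⟨b, fun z hz => hz.1.2⟩
  obtain ⟨⟨hay, hyb⟩, hfy⟩ := hT.csSup_mem ⟨a, ⟨le_rfl, hab⟩, ha⟩ hTbdd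
  refine ⟨sSup T, ⟨hay, hyb.lt_of_ne ?_⟩, hfy, fun z hz hfz => ?_⟩
  · rintro hyb
    exact hb (hyb ▸ hfy)
  · exact hz.1.not_ge (le_csSup hTbdd ⟨⟨hay.trans hz.1.le, hz.2⟩, hfz⟩)

lemma ContinuousOn.le_of_critical_le {f : ℝ → ℝ} {a b m : ℝ} (hf : ContinuousOn f (Icc a b))
    (ha : f a ≤ m) (hb : f b ≤ m) (hcrit : ∀ c ∈ Ioo a b, deriv f c = 0 → f c ≤ m)
    {x : ℝ} (hx : x ∈ Icc a b) : f x ≤ m := by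
  obtain ⟨c, hc, hmax⟩ := isCompact_Icc.exists_isMaxOn ⟨x, hx⟩ hf
  refine (hmax hx).trans ?_
  rcases hc.1.eq_or_lt with rfl | hac
  · exact ha
  rcases hc.2.eq_or_lt with rfl | hcb
  · exact hb
  exact hcrit c ⟨hac, hcb⟩ (hmax.isLocalMax (Icc_mem_nhds hac hcb)).deriv_eq_zero

lemma HasDerivWithinAt.le_of_le_slope_Ioc {g : ℝ → ℝ} {a b g' k : ℝ}
    (hg : HasDerivWithinAt g g' (Ioc a b) a) (hab : a < b)
    (hk : ∀ z ∈ Ioc a b, k ≤ slope g a z) : k ≤ g' := by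
  have hlim := hasDerivWithinAt_iff_tendsto_slope.mp hg
  rw [sdiff_singleton_eq_self fun h => lt_irrefl a h.1] at hlim
  have : (𝓝[Ioc a b] a).NeBot := by
    rw [nhdsWithin_Ioc_eq_nhdsGT hab]
    infer_instance
  exact ge_of_tendsto hlim (eventually_nhdsWithin_of_forall hk)

lemma HasDerivWithinAt.eq_zero_of_eqOn_Icc {g : ℝ → ℝ} {s : Set ℝ} {a b g' : ℝ}
    (hg : HasDerivWithinAt g g' s b) (hsub : Icc a b ⊆ s) (hab : a < b)
    (hzero : ∀ z ∈ Icc a b, g z = 0) : g' = 0 :=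
  (uniqueDiffOn_Icc hab b (right_mem_Icc.2 hab.le)).eq_deriv _ (hg.mono hsub)
    ((hasDerivWithinAt_const b _ 0).congr hzero (hzero b (right_mem_Icc.2 hab.le)))

lemma sub_le_two_mul_mul_of_PL {f f' : ℝ → ℝ} {y w m C : ℝ} (hC : 0 < C)
    (hcont : ContinuousOn f (Icc y w)) (hf : ∀ z ∈ Ioo y w, HasDerivAt f (f' z) z)
    (hfy : f y = m) (hpos : ∀ z ∈ Ioc y w, m < f z) (hf'pos : ∀ z ∈ Ioc y w, 0 < f' z)
    (hPL : ∀ z ∈ Ioc y w, f z - m ≤ C * f' z ^ 2) {z : ℝ} (hz : z ∈ Ioc y w) :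
    z - y ≤ 2 * C * f' z := by
  set g : ℝ → ℝ := fun t => √(f t - m)
  have hg_pos : ∀ t ∈ Ioc y w, 0 < g t := fun t ht => Real.sqrt_pos.2 (sub_pos.2 (hpos t ht))
  have hg_le : ∀ t ∈ Ioc y w, g t ≤ √C * f' t := fun t ht =>
    calc √(f t - m) ≤ √(C * f' t ^ 2) := Real.sqrt_le_sqrt (hPL t ht)
      _ = √C * f' t := by rw [Real.sqrt_mul hC.le, Real.sqrt_sq (hf'pos t ht).le]
  have hg' : ∀ t ∈ Ioo y w, HasDerivAt g (f' t / (2 * g t)) t := fun t ht =>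
    ((hf t ht).sub_const m).sqrt (sub_pos.2 (hpos t ⟨ht.1, ht.2.le⟩)).ne'
  have hg'_ge : ∀ t ∈ Ioo y w, 1 / (2 * √C) ≤ f' t / (2 * g t) := fun t ht => by
    have := hg_le t ⟨ht.1, ht.2.le⟩
    have := hg_pos t ⟨ht.1, ht.2.le⟩
    rw [div_le_div_iff₀ (by positivity) (by positivity)]
    linarith
  obtain ⟨c, hc, hslope⟩ := exists_hasDerivAt_eq_slope g (fun t => f' t / (2 * g t)) hz.1
    (((hcont.mono (Icc_subset_Icc_right hz.2)).sub continuousOn_const).sqrt)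
    (fun t ht => hg' t ⟨ht.1, ht.2.trans_le hz.2⟩)
  have hgy : g y = 0 := by simp [g, hfy]
  have hgz : z - y ≤ 2 * √C * g z := by
    have := hg'_ge c ⟨hc.1, hc.2.trans_le hz.2⟩
    rw [hslope, hgy, sub_zero, div_le_div_iff₀ (by positivity) (sub_pos.2 hz.1)] at this
    linarith
  calc z - y ≤ 2 * √C * g z := hgz
    _ ≤ 2 * √C * (√C * f' z) := by gcongr; exact hg_le z hz
    _ = 2 * C * f' z := by rw [← mul_assoc, mul_assoc 2, Real.mul_self_sqrt hC.le]

lemma pos_of_PL_of_lt_on_Ioc {f f' : ℝ → ℝ} {y w m C A : ℝ} (hyw : y < w)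
    (hcont : ContinuousOn f (Icc y w)) (hf : ∀ z ∈ Ioo y w, HasDerivAt f (f' z) z)
    (hf'cont : ContinuousOn f' (Ioc y w)) (hA : HasDerivWithinAt f' A (Ioc y w) y)
    (hf'y : f' y = 0) (hfy : f y = m) (hpos : ∀ z ∈ Ioc y w, m < f z)
    (hPL : ∀ z ∈ Ioc y w, f z - m ≤ C * f' z ^ 2) : 0 < A := by
  have hwmem : w ∈ Ioc y w := ⟨hyw, le_rfl⟩
  have hC : 0 < C := by
    have := hPL w hwmem
    have := hpos w hwmem
    by_contra! hC
    nlinarith [sq_nonneg (f' w)]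
  have hne : ∀ z ∈ Ioc y w, f' z ≠ 0 := fun z hz h0 => by
    have := hPL z hz
    rw [h0] at this
    linarith [hpos z hz]
  obtain ⟨c, hc, hc_slope⟩ := exists_hasDerivAt_eq_slope f f' hyw hcont hf
  have hf'c : 0 < f' c := by
    rw [hc_slope, hfy]
    exact div_pos (sub_pos.2 (hpos w hwmem)) (sub_pos.2 hyw)
  have hf'pos : ∀ z ∈ Ioc y w, 0 < f' z := fun z hz =>
    isPreconnected_Ioc.pos_of_ne_zero hf'cont hne ⟨hc.1, hc.2.le⟩ hf'c hz
  have hslope : ∀ z ∈ Ioc y w, 1 / (2 * C) ≤ slope f' y z := fun z hz => by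
    rw [slope_def_field, hf'y, sub_zero, div_le_div_iff₀ (by positivity) (sub_pos.2 hz.1)]
    linarith [sub_le_two_mul_mul_of_PL hC hcont hf hfy hpos hf'pos hPL hz]
  exact (by positivity : (0 : ℝ) < 1 / (2 * C)).trans_le
    (hA.le_of_le_slope_Ioc hyw hslope)

def SatisfiesPLOn (f : ℝ → ℝ) (s : Set ℝ) (C : ℝ) : Prop :=
  ∀ x ∈ s, f x - sInf (f '' s) ≤ C * derivWithin f s x ^ 2

lemma image_comp_neg (f : ℝ → ℝ) (s : Set ℝ) : (fun x => f (-x)) '' (-s) = f '' s := by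
  simpa [image_neg_eq_neg] using image_comp f Neg.neg (-s)

namespace SatisfiesPLOn

variable {f : ℝ → ℝ} {s : Set ℝ} {C : ℝ}

lemma le_sInf_of_derivWithin_eq_zero (hPL : SatisfiesPLOn f s C) {x : ℝ} (hx : x ∈ s)
    (hd : derivWithin f s x = 0) : f x ≤ sInf (f '' s) := by
  have := hPL x hx
  rw [hd] at this
  linarith

lemma comp_neg (hPL : SatisfiesPLOn f s C) : SatisfiesPLOn (fun x => f (-x)) (-s) C := by
  intro x hx
  rw [image_comp_neg, derivWithin_comp_neg, neg_neg, neg_sq]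
  exact hPL (-x) hx

end SatisfiesPLOn

lemma derivWithin_derivWithin_comp_neg (f : ℝ → ℝ) (s : Set ℝ) (x : ℝ) :
    derivWithin (derivWithin (fun x => f (-x)) s) s x =
      derivWithin (derivWithin f (-s)) (-s) (-x) := by
  have : derivWithin (fun x => f (-x)) s = fun x => -derivWithin f (-s) (-x) :=
    funext (derivWithin_comp_neg f s)
  rw [this, derivWithin.fun_neg, derivWithin_comp_neg, neg_neg]

theorem derivWithin_derivWithin_pos_of_lt {f : ℝ → ℝ} {l u C x₀ w : ℝ}
    (hf : ContDiffOn ℝ 2 f (Icc l u)) (hPL : SatisfiesPLOn f (Icc l u) C)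
    (hx₀ : x₀ ∈ Icc l u) (hd : derivWithin f (Icc l u) x₀ = 0) (hw : w ∈ Icc l u)
    (hx₀w : x₀ < w) (hfw : sInf (f '' Icc l u) < f w) :
    0 < derivWithin (derivWithin f (Icc l u)) (Icc l u) x₀ := by
  set s := Icc l u
  set m := sInf (f '' s)
  set f' := derivWithin f s
  have hf' : ContDiffOn ℝ 1 f' s :=
    hf.derivWithin (uniqueDiffOn_Icc (hx₀.1.trans_lt (hx₀w.trans_le hw.2))) (by norm_num)
  have hf'' : ∀ z ∈ s, HasDerivWithinAt f' (derivWithin f' s z) s z := fun z hz =>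
    (hf'.differentiableOn one_ne_zero z hz).hasDerivWithinAt
  have hderiv : ∀ z ∈ Ioo l u, HasDerivAt f (f' z) z := fun z hz =>
    (hf.differentiableOn two_ne_zero z (Ioo_subset_Icc_self hz)).hasDerivWithinAt.hasDerivAt
      (Icc_mem_nhds hz.1 hz.2)
  have hm : ∀ z ∈ s, m ≤ f z := fun z hz =>
    csInf_le (isCompact_Icc.image_of_continuousOn hf.continuousOn).bddBelow (mem_image_of_mem f hz)
  have hfx₀ : f x₀ = m := (hPL.le_sInf_of_derivWithin_eq_zero hx₀ hd).antisymm (hm x₀ hx₀)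
  obtain ⟨y, ⟨hx₀y, hyw⟩, hfy, hy_last⟩ :=
    (hf.continuousOn.mono (Icc_subset_Icc hx₀.1 hw.2)).exists_last_eq hx₀w.le hfx₀ hfw.ne'
  have hx₀y_sub : Icc x₀ y ⊆ s := Icc_subset_Icc hx₀.1 (hyw.le.trans hw.2)
  have hyw_sub : Icc y w ⊆ s := Icc_subset_Icc (hx₀.1.trans hx₀y) hw.2
  have hx₀y_int : Ioc x₀ y ⊆ Ioo l u := fun z hz =>
    ⟨hx₀.1.trans_lt hz.1, (hz.2.trans_lt hyw).trans_le hw.2⟩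
  have hflat : ∀ z ∈ Icc x₀ y, f z = m := by
    intro z hz
    refine le_antisymm ?_ (hm z (hx₀y_sub hz))
    refine (hf.continuousOn.mono hx₀y_sub).le_of_critical_le hfx₀.le hfy.le
      (fun c hc hc0 => ?_) hz
    have hc' := hx₀y_int (Ioo_subset_Ioc_self hc)
    exact hPL.le_sInf_of_derivWithin_eq_zero (Ioo_subset_Icc_self hc')
      ((hderiv c hc').deriv.symm.trans hc0)
  have hf'flat : ∀ z ∈ Icc x₀ y, f' z = 0 := by
    intro z hz
    rcases hz.1.eq_or_lt with rfl | hx₀z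
    · exact hd
    have hz' := hx₀y_int ⟨hx₀z, hz.2⟩
    have hmin : IsMinOn f s z := fun t ht => (hflat z hz).trans_le (hm t ht)
    exact (hmin.isLocalMin (Icc_mem_nhds hz'.1 hz'.2)).hasDerivAt_eq_zero (hderiv z hz')
  have hy_pos : 0 < derivWithin f' s y :=
    pos_of_PL_of_lt_on_Ioc hyw (hf.continuousOn.mono hyw_sub)
      (fun z hz => hderiv z (Ioo_subset_Ioo (hx₀.1.trans hx₀y) hw.2 hz))
      (hf'.continuousOn.mono (Ioc_subset_Icc_self.trans hyw_sub))
      ((hf'' y (hyw_sub (left_mem_Icc.2 hyw.le))).mono (Ioc_subset_Icc_self.trans hyw_sub))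
      (hf'flat y (right_mem_Icc.2 hx₀y)) hfy
      (fun z hz => (hm z (hyw_sub (Ioc_subset_Icc_self hz))).lt_of_ne (hy_last z hz).symm)
      (fun z hz => hPL z (hyw_sub (Ioc_subset_Icc_self hz)))
  obtain rfl : x₀ = y := by
    by_contra hne
    exact hy_pos.ne' <| (hf'' y (hx₀y_sub (right_mem_Icc.2 hx₀y))).eq_zero_of_eqOn_Icc
      hx₀y_sub (hx₀y.lt_of_ne hne) hf'flat
  exact hy_pos

theorem derivWithin_derivWithin_pos_of_gt {f : ℝ → ℝ} {l u C x₀ w : ℝ}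
    (hf : ContDiffOn ℝ 2 f (Icc l u)) (hPL : SatisfiesPLOn f (Icc l u) C)
    (hx₀ : x₀ ∈ Icc l u) (hd : derivWithin f (Icc l u) x₀ = 0) (hw : w ∈ Icc l u)
    (hwx₀ : w < x₀) (hfw : sInf (f '' Icc l u) < f w) :
    0 < derivWithin (derivWithin f (Icc l u)) (Icc l u) x₀ := by
  have hmem : ∀ {z}, z ∈ Icc l u → -z ∈ Icc (-u) (-l) := fun hz =>
    ⟨neg_le_neg hz.2, neg_le_neg hz.1⟩
  have hfneg : ContDiffOn ℝ 2 (fun x => f (-x)) (Icc (-u) (-l)) :=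
    hf.comp contDiff_neg.contDiffOn fun _ hx => ⟨le_neg.2 hx.2, neg_le.2 hx.1⟩
  have := derivWithin_derivWithin_pos_of_lt hfneg (neg_Icc l u ▸ hPL.comp_neg) (hmem hx₀)
    (by rw [← neg_Icc, derivWithin_comp_neg, neg_neg, neg_neg, hd, neg_zero]) (hmem hw)
    (neg_lt_neg hwx₀) (by rwa [← neg_Icc, image_comp_neg, neg_neg])
  rwa [← neg_Icc, derivWithin_derivWithin_comp_neg, neg_neg, neg_neg] at this

/-- If a non-constant `C²` function `f` on a compact interval `[l,u]` satisfies the PL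
condition `f(x) - inf f ≤ C |f'(x)|²` for some constant `C`, then wherever `f'` vanishes
on `[l,u]`, the second derivative `f''` is strictly positive. -/
theorem statement_3 (l u : ℝ) (f : ℝ → ℝ)
    (hf : ContDiffOn ℝ 2 f (Icc l u))
    (hnc : ∃ x ∈ Icc l u, ∃ y ∈ Icc l u, f x ≠ f y)
    (C : ℝ)
    (hPL : ∀ x ∈ Icc l u,
      f x - sInf (f '' Icc l u) ≤ C * (derivWithin f (Icc l u) x) ^ 2) :
    ∀ x ∈ Icc l u, derivWithin f (Icc l u) x = 0 →
      0 < derivWithin (derivWithin f (Icc l u)) (Icc l u) x := by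
  intro x₀ hx₀ hd
  have hbdd : BddBelow (f '' Icc l u) :=
    (isCompact_Icc.image_of_continuousOn hf.continuousOn).bddBelow
  obtain ⟨w, hw, hfw⟩ : ∃ w ∈ Icc l u, sInf (f '' Icc l u) < f w := by
    obtain ⟨a, ha, b, hb, hab⟩ := hnc
    rcases hab.lt_or_gt with h | h
    · exact ⟨b, hb, (csInf_le hbdd (mem_image_of_mem f ha)).trans_lt h⟩
    · exact ⟨a, ha, (csInf_le hbdd (mem_image_of_mem f hb)).trans_lt h⟩
  have hPL : SatisfiesPLOn f (Icc l u) C := hPL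
  have hwx₀ : w ≠ x₀ := by
    rintro rfl
    exact (hPL.le_sInf_of_derivWithin_eq_zero hw hd).not_gt hfw
  rcases hwx₀.lt_or_gt with hwx₀ | hx₀w
  · exact derivWithin_derivWithin_pos_of_gt hf hPL hx₀ hd hw hwx₀ hfw
  · exact derivWithin_derivWithin_pos_of_lt hf hPL hx₀ hd hw hx₀w hfw
end

section
/- Let I be a compact interval of ℝ and let f : I → ℝ be a C² function that is not constant. If for every x ∈ I the implication holds that f'(x) = 0 implies f''(x) > 0, then f satisfies the PL condition: there exists C < ∞ such that f(x) − inf f ≤ C|f'(x)|² for every x ∈ I. -/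
/-!
At a critical point `x₀` with `f''(x₀) = c > 0`, the first-order expansion of `f'` at `x₀`
combined with the mean value theorem gives, for `y` near `x₀`,
`f x₀ < f y ≤ f x₀ + 3c/2 (y - x₀)²` and `|f' y| ≥ c/2 |y - x₀|`, hence
`f y - f x₀ ≤ 6/c (f' y)²`. Every critical point is a global minimiser: otherwise the maximum
of `f` between it and a lower point would be an interior critical point, hence a strict local
minimum. So the PL inequality holds locally near critical points, and trivially near the other
points, where `f'` stays away from zero; compactness of `[l, u]` glues the local constants.
-/

open Set Filter Topology

theorem IsCompact.exists_forall_le_mul {X : Type*} [TopologicalSpace X] {s : Set X}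
    (hs : IsCompact s) {g h : X → ℝ} (hh : ∀ x ∈ s, 0 ≤ h x)
    (hloc : ∀ x ∈ s, ∃ C, ∀ᶠ y in 𝓝[s] x, g y ≤ C * h y) :
    ∃ C, ∀ y ∈ s, g y ≤ C * h y := by
  suffices ∃ C, ∀ y ∈ s ∩ s, g y ≤ C * h y by simpa only [inter_self]
  refine hs.induction_on (p := fun t ↦ ∃ C, ∀ y ∈ s ∩ t, g y ≤ C * h y) ⟨0, by simp⟩
    (fun t t' htt' ⟨C, hC⟩ ↦ ⟨C, fun y hy ↦ hC y ⟨hy.1, htt' hy.2⟩⟩) ?_ fun x hx ↦ ?_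
  · rintro t t' ⟨C, hC⟩ ⟨C', hC'⟩
    refine ⟨max C C', fun y ⟨hys, hy⟩ ↦ ?_⟩
    rcases hy with hy | hy
    · exact (hC y ⟨hys, hy⟩).trans (by gcongr; exacts [hh y hys, le_max_left _ _])
    · exact (hC' y ⟨hys, hy⟩).trans (by gcongr; exacts [hh y hys, le_max_right _ _])
  · obtain ⟨C, hC⟩ := hloc x hx
    exact ⟨_, hC, C, fun y hy ↦ hy.2⟩

theorem exists_eventually_le_mul_of_pos {X : Type*} [TopologicalSpace X] {s : Set X} {x : X}
    {g h : X → ℝ} {B : ℝ} (hg : ∀ y ∈ s, g y ≤ B) (hh : ContinuousWithinAt h s x)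
    (hx : 0 < h x) : ∃ C, ∀ᶠ y in 𝓝[s] x, g y ≤ C * h y := by
  refine ⟨2 * |B| / h x, ?_⟩
  filter_upwards [hh.eventually (lt_mem_nhds (half_lt_self hx)), self_mem_nhdsWithin]
    with y hy hys
  calc g y ≤ |B| := (hg y hys).trans (le_abs_self B)
    _ = 2 * |B| / h x * (h x / 2) := by field_simp
    _ ≤ 2 * |B| / h x * h y := by gcongr

theorem HasDerivWithinAt.eventually_abs_sub_mul_le_half {g : ℝ → ℝ} {s : Set ℝ} {x₀ c : ℝ}
    (hg : HasDerivWithinAt g c s x₀) (hg₀ : g x₀ = 0) (hc : 0 < c) :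
    ∀ᶠ y in 𝓝[s] x₀, |g y - c * (y - x₀)| ≤ c / 2 * |y - x₀| := by
  filter_upwards [(hasDerivWithinAt_iff_isLittleO.1 hg).bound (half_pos hc)] with y hy
  simpa [hg₀, mul_comm c] using hy

theorem exists_derivWithin_Icc_eq_mul_sub {f : ℝ → ℝ} {l u x y : ℝ}
    (hf : DifferentiableOn ℝ f (Icc l u)) (hx : x ∈ Icc l u) (hy : y ∈ Icc l u) (hxy : x ≠ y) :
    ∃ θ ∈ Ioo (0 : ℝ) 1, f y - f x = derivWithin f (Icc l u) (x + θ * (y - x)) * (y - x) := by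
  wlog hlt : x < y generalizing x y
  · obtain ⟨θ, ⟨hθ₀, hθ₁⟩, hθ⟩ := this hy hx hxy.symm (lt_of_le_of_ne (not_lt.1 hlt) hxy.symm)
    refine ⟨1 - θ, ⟨by linarith, by linarith⟩, ?_⟩
    rw [show x + (1 - θ) * (y - x) = y + θ * (x - y) by ring]
    linear_combination -hθ
  have hsub : Ioo x y ⊆ Ioo l u := Ioo_subset_Ioo hx.1 hy.2
  obtain ⟨ξ, hξ, hslope⟩ := exists_deriv_eq_slope f hlt
    (hf.continuousOn.mono (Icc_subset_Icc hx.1 hy.2))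
    fun z hz ↦ ((hf z (Ioo_subset_Icc_self (hsub hz))).differentiableAt
      (Icc_mem_nhds (hsub hz).1 (hsub hz).2)).differentiableWithinAt
  have hyx : 0 < y - x := sub_pos.2 hlt
  refine ⟨(ξ - x) / (y - x),
    ⟨div_pos (by linarith [hξ.1]) hyx, (div_lt_one hyx).2 (by linarith [hξ.2])⟩, ?_⟩
  rw [div_mul_cancel₀ _ hyx.ne', add_sub_cancel,
    derivWithin_of_mem_nhds (Icc_mem_nhds (hsub hξ).1 (hsub hξ).2), hslope,
    div_mul_cancel₀ _ hyx.ne']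

theorem derivWithin_singleton_self {𝕜 F : Type*} [NontriviallyNormedField 𝕜]
    [NormedAddCommGroup F] [NormedSpace 𝕜 F] (f : 𝕜 → F) (x : 𝕜) :
    derivWithin f {x} x = 0 :=
  derivWithin_zero_of_not_accPt fun h ↦ by
    obtain ⟨y, ⟨-, rfl⟩, hy⟩ := accPt_iff_nhds.1 h univ univ_mem
    exact hy rfl

section CriticalPoint

variable {f : ℝ → ℝ} {l u x₀ c : ℝ}

theorem eventually_lt_and_sub_le_sq_of_derivWithin_eq_zero
    (hf : DifferentiableOn ℝ f (Icc l u)) (hx₀ : x₀ ∈ Icc l u)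
    (hcrit : derivWithin f (Icc l u) x₀ = 0) (hc : 0 < c)
    (hf' : HasDerivWithinAt (derivWithin f (Icc l u)) c (Icc l u) x₀) :
    ∀ᶠ y in 𝓝[Icc l u] x₀, (y ≠ x₀ → f x₀ < f y) ∧ f y - f x₀ ≤ 3 * c / 2 * (y - x₀) ^ 2 := by
  have hlin := hf'.eventually_abs_sub_mul_le_half hcrit hc
  rw [eventually_nhdsWithin_iff, Metric.eventually_nhds_iff] at hlin ⊢
  obtain ⟨ε, hε, hball⟩ := hlin
  refine ⟨ε, hε, fun y hyx hy ↦ ?_⟩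
  rcases eq_or_ne y x₀ with rfl | hne
  · simp
  obtain ⟨θ, ⟨hθ₀, hθ₁⟩, hmvt⟩ := exists_derivWithin_Icc_eq_mul_sub hf hx₀ hy hne.symm
  set d := y - x₀
  set ξ := x₀ + θ * d
  have hξ : ξ ∈ Icc l u := by
    simpa only [smul_eq_mul] using (convex_Icc l u).add_smul_sub_mem hx₀ hy ⟨hθ₀.le, hθ₁.le⟩
  have hξx : dist ξ x₀ < ε := by
    rw [Real.dist_eq, add_sub_cancel_left, abs_mul, abs_of_pos hθ₀, ← Real.dist_eq]
    nlinarith [dist_nonneg (x := y) (y := x₀)]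
  have hξd : θ * d = ξ - x₀ := by ring
  -- the mean value `f y - f x₀ = f'(ξ) d` lies within `θ c d² / 2` of `θ c d²`
  have hmean : |(f y - f x₀) - θ * c * d ^ 2| ≤ θ * (c / 2) * d ^ 2 := by
    calc |(f y - f x₀) - θ * c * d ^ 2|
        = |derivWithin f (Icc l u) ξ - c * (ξ - x₀)| * |d| := by
          rw [hmvt, ← abs_mul, ← hξd]; ring_nf
      _ ≤ c / 2 * |ξ - x₀| * |d| := by gcongr; exact hball hξx hξ
      _ = θ * (c / 2) * d ^ 2 := by
          rw [← hξd, abs_mul, abs_of_pos hθ₀, ← sq_abs d]; ring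
  have hd : 0 < d ^ 2 := by positivity [sub_ne_zero.2 hne]
  have hpos : 0 < θ * c * d ^ 2 := by positivity
  refine ⟨fun _ ↦ ?_, ?_⟩ <;> nlinarith [abs_le.1 hmean]

theorem eventually_sub_le_div_mul_derivWithin_sq
    (hf : DifferentiableOn ℝ f (Icc l u)) (hx₀ : x₀ ∈ Icc l u)
    (hcrit : derivWithin f (Icc l u) x₀ = 0) (hc : 0 < c)
    (hf' : HasDerivWithinAt (derivWithin f (Icc l u)) c (Icc l u) x₀) :
    ∀ᶠ y in 𝓝[Icc l u] x₀, f y - f x₀ ≤ 6 / c * derivWithin f (Icc l u) y ^ 2 := by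
  filter_upwards [eventually_lt_and_sub_le_sq_of_derivWithin_eq_zero hf hx₀ hcrit hc hf',
    hf'.eventually_abs_sub_mul_le_half hcrit hc] with y hquad hlin
  have hlower : c / 2 * |y - x₀| ≤ |derivWithin f (Icc l u) y| := by
    have := abs_sub_abs_le_abs_sub (c * (y - x₀)) (derivWithin f (Icc l u) y)
    rw [abs_sub_comm, abs_mul, abs_of_pos hc] at this
    linarith
  have hsq : c ^ 2 * (y - x₀) ^ 2 ≤ 4 * derivWithin f (Icc l u) y ^ 2 := by
    have := pow_le_pow_left₀ (by positivity) hlower 2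
    rw [mul_pow, sq_abs, sq_abs] at this
    linarith
  calc f y - f x₀ ≤ 3 * c / 2 * (y - x₀) ^ 2 := hquad.2
    _ = 6 / c * (c ^ 2 * (y - x₀) ^ 2 / 4) := by field_simp; ring
    _ ≤ 6 / c * derivWithin f (Icc l u) y ^ 2 := by gcongr; linarith

theorem isMinOn_Icc_of_derivWithin_eq_zero (hf : ContinuousOn f (Icc l u))
    (hloc : ∀ x ∈ Icc l u, derivWithin f (Icc l u) x = 0 →
      ∀ᶠ y in 𝓝[Icc l u] x, y ≠ x → f x < f y)
    (hx₀ : x₀ ∈ Icc l u) (hcrit : derivWithin f (Icc l u) x₀ = 0) : IsMinOn f (Icc l u) x₀ := by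
  refine isMinOn_iff.2 fun y hy ↦ ?_
  by_contra! hlt
  have hne : x₀ ≠ y := by rintro rfl; exact lt_irrefl _ hlt
  have hJ : uIcc x₀ y ⊆ Icc l u := uIcc_subset_Icc hx₀ hy
  obtain ⟨q, hqJ, hqmax⟩ := isCompact_uIcc.exists_isMaxOn nonempty_uIcc (hf.mono hJ)
  -- points of the open segment close to `x₀` beat `x₀`, so the maximum is not at an endpoint
  have : (𝓝[uIoo x₀ y] x₀).NeBot :=
    mem_closure_iff_nhdsWithin_neBot.1 (closure_uIoo hne ▸ left_mem_uIcc)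
  obtain ⟨z, hz, hzJ⟩ := ((hloc x₀ hx₀ hcrit).filter_mono
    (nhdsWithin_mono _ (uIoo_subset_uIcc_self.trans hJ))).and self_mem_nhdsWithin |>.exists
  have hzq : f x₀ < f q :=
    (hz (ne_of_mem_of_not_mem hzJ left_notMem_uIoo)).trans_le
      (isMaxOn_iff.1 hqmax z (uIoo_subset_uIcc_self hzJ))
  have hq : q ∈ uIoo x₀ y := by
    have hqx : q ≠ x₀ := by rintro rfl; exact hzq.false
    have hqy : q ≠ y := by rintro rfl; exact (hlt.trans hzq).false
    rcases le_total x₀ y with h | h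
    · rw [uIcc_of_le h] at hqJ
      rw [uIoo_of_le h]
      exact ⟨hqJ.1.lt_of_ne hqx.symm, hqJ.2.lt_of_ne hqy⟩
    · rw [uIcc_of_ge h] at hqJ
      rw [uIoo_of_ge h]
      exact ⟨hqJ.1.lt_of_ne hqy.symm, hqJ.2.lt_of_ne hqx⟩
  have hqI : Icc l u ∈ 𝓝 q := by
    obtain ⟨hlq, hqu⟩ := uIoo_subset_Ioo hx₀ hy hq
    exact Icc_mem_nhds hlq hqu
  have hqloc : IsLocalMax f q :=
    hqmax.isLocalMax (mem_of_superset (isOpen_Ioo.mem_nhds hq) uIoo_subset_uIcc_self)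
  have hqcrit : derivWithin f (Icc l u) q = 0 := by
    rw [derivWithin_of_mem_nhds hqI]; exact hqloc.deriv_eq_zero
  have hqmin := hloc q (hJ hqJ) hqcrit
  rw [nhdsWithin_eq_nhds.2 hqI] at hqmin
  have hfalse : ∀ᶠ w in 𝓝[≠] q, False := by
    filter_upwards [nhdsWithin_le_nhds hqmin, nhdsWithin_le_nhds hqloc, self_mem_nhdsWithin]
      with w hlt hle hw
    exact (hlt hw).not_ge hle
  exact hfalse.exists.elim fun _ ↦ id

end CriticalPoint

theorem statement_4_general (l u : ℝ) (f : ℝ → ℝ)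
    (hf : ContDiffOn ℝ 2 f (Icc l u))
    (h : ∀ x ∈ Icc l u, derivWithin f (Icc l u) x = 0 →
      0 < derivWithin (derivWithin f (Icc l u)) (Icc l u) x) :
    ∃ C : ℝ, ∀ x ∈ Icc l u,
      f x - sInf (f '' Icc l u) ≤ C * (derivWithin f (Icc l u) x) ^ 2 := by
  rcases le_or_gt u l with hul | hlu
  · -- `Icc l u` is at most a point, where `derivWithin` is the junk value `0`, contradicting `h`
    refine ⟨0, fun x hx ↦ ?_⟩
    obtain rfl : l = x := le_antisymm hx.1 (hx.2.trans hul)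
    obtain rfl : u = l := le_antisymm hul hx.2
    simp [derivWithin_singleton_self] at h
  have hdiff : DifferentiableOn ℝ f (Icc l u) := hf.differentiableOn (by norm_num)
  have hf' : ContDiffOn ℝ 1 (derivWithin f (Icc l u)) (Icc l u) :=
    hf.derivWithin (uniqueDiffOn_Icc hlu) (by norm_num)
  have hf'' (x : ℝ) (hx : x ∈ Icc l u) : HasDerivWithinAt (derivWithin f (Icc l u))
      (derivWithin (derivWithin f (Icc l u)) (Icc l u) x) (Icc l u) x :=
    (hf'.differentiableOn one_ne_zero x hx).hasDerivWithinAt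
  have hstrict : ∀ x ∈ Icc l u, derivWithin f (Icc l u) x = 0 →
      ∀ᶠ y in 𝓝[Icc l u] x, y ≠ x → f x < f y := fun x hx hx₀ ↦
    (eventually_lt_and_sub_le_sq_of_derivWithin_eq_zero hdiff hx hx₀ (h x hx hx₀)
      (hf'' x hx)).mono fun _ hy ↦ hy.1
  obtain ⟨B, hB⟩ := (isCompact_Icc.image_of_continuousOn hf.continuousOn).bddAbove
  refine isCompact_Icc.exists_forall_le_mul (fun _ _ ↦ sq_nonneg _) fun x hx ↦ ?_
  by_cases hx₀ : derivWithin f (Icc l u) x = 0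
  · have hmin := isMinOn_Icc_of_derivWithin_eq_zero hf.continuousOn hstrict hx hx₀
    have hinf : sInf (f '' Icc l u) = f x :=
      IsLeast.csInf_eq ⟨mem_image_of_mem f hx, forall_mem_image.2 (isMinOn_iff.1 hmin)⟩
    exact ⟨_, hinf ▸ eventually_sub_le_div_mul_derivWithin_sq hdiff hx hx₀ (h x hx hx₀) (hf'' x hx)⟩
  · exact exists_eventually_le_mul_of_pos
      (fun y hy ↦ sub_le_sub_right (hB (mem_image_of_mem f hy)) (sInf (f '' Icc l u)))
      ((hf'.continuousOn.pow 2) x hx) (by positivity)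

/-- If `f` is a non-constant `C²` function on a compact interval `[l,u]` such that
`f'(x) = 0` implies `f''(x) > 0` for every `x ∈ [l,u]`, then `f` satisfies the PL
condition: there is a constant `C` such that `f(x) - inf f ≤ C |f'(x)|²` on `[l,u]`. -/
theorem statement_4 (l u : ℝ) (f : ℝ → ℝ)
    (hf : ContDiffOn ℝ 2 f (Icc l u))
    (hnc : ∃ x ∈ Icc l u, ∃ y ∈ Icc l u, f x ≠ f y)
    (h : ∀ x ∈ Icc l u, derivWithin f (Icc l u) x = 0 →
      0 < derivWithin (derivWithin f (Icc l u)) (Icc l u) x) :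
    ∃ C : ℝ, ∀ x ∈ Icc l u,
      f x - sInf (f '' Icc l u) ≤ C * (derivWithin f (Icc l u) x) ^ 2 :=
  statement_4_general l u f hf h
end

section
/- Let I be a compact interval of ℝ and let f : I² → ℝ be a C² function. Suppose that for every z ∈ I², the two implications hold: ∂_x f(z) = 0 implies ∂_x² f(z) > 0, and ∂_y f(z) = 0 implies ∂_y² f(z) < 0. Then f satisfies the two-sided PL condition: there exists a constant C < ∞ such that for every (x,y) ∈ I², f(x,y) − inf_{x'∈I} f(x',y) ≤ C|∂_x f(x,y)|² and sup_{y'∈I} f(x,y') − f(x,y) ≤ C|∂_y f(x,y)|². -/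
/-!
On a horizontal slice `g = f(·, y)`, compactness of `I²` turns the hypothesis into a uniform
`ε > 0` with `|g'| ≤ ε ⇒ g'' ≥ ε`. Then `g'` can cross a level in `[-ε, ε]` only upwards, so if
`|g'(x)| < ε`, `g'` stays in `[-ε, ε]` on the segment from `x` to a minimiser `m` of `g`; there
`g` is `ε`-strongly convex, whence `g(x) - g(m) ≤ g'(x)² / (2ε)`. If `|g'(x)| ≥ ε`, the bound
`g(x) - g(m) ≤ 2 sup |f|` suffices.
-/

open Set

section Interval

variable {g v w : ℝ → ℝ} {l u : ℝ}

theorem le_of_le_of_deriv_pos_at_level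
    (hv : ∀ t ∈ Icc l u, HasDerivWithinAt v (w t) (Icc l u) t) {c : ℝ}
    (hc : ∀ t ∈ Icc l u, v t = c → 0 < w t) {s t : ℝ} (hls : l ≤ s) (hst : s ≤ t)
    (htu : t ≤ u) (hcs : c ≤ v s) : c ≤ v t := by
  have hsub : Icc s t ⊆ Icc l u := Icc_subset_Icc hls htu
  refine image_le_of_deriv_right_lt_deriv_boundary' (f' := fun _ => 0) continuousOn_const
    (fun r _ => hasDerivWithinAt_const r _ c) hcs
    (fun r hr => (hv r (hsub hr)).continuousWithinAt.mono hsub)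
    (fun r hr => (hv r (hsub (Ico_subset_Icc_self hr))).mono_of_mem_nhdsWithin
      (Icc_mem_nhdsGE_of_mem ⟨hls.trans hr.1, hr.2.trans_le htu⟩))
    (fun r hr hr' => hc r (hsub (Ico_subset_Icc_self hr)) hr'.symm) ⟨hst, le_rfl⟩

theorem IsMinOn.nonneg_of_hasDerivWithinAt_Icc {g' a : ℝ} (hmin : IsMinOn g (Icc l u) a)
    (ha : a ∈ Icc l u) (hg : HasDerivWithinAt g g' (Icc l u) a) (hau : a < u) : 0 ≤ g' := by
  have h := hmin.localize.hasFDerivWithinAt_nonneg hg.hasFDerivWithinAt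
    (sub_mem_posTangentConeAt_of_segment_subset
      ((segment_eq_Icc hau.le).trans_subset (Icc_subset_Icc ha.1 le_rfl)))
  simp only [ContinuousLinearMap.toSpanSingleton_apply, smul_eq_mul] at h
  exact nonneg_of_mul_nonneg_right h (sub_pos.2 hau)

theorem IsMinOn.nonpos_of_hasDerivWithinAt_Icc {g' a : ℝ} (hmin : IsMinOn g (Icc l u) a)
    (ha : a ∈ Icc l u) (hg : HasDerivWithinAt g g' (Icc l u) a) (hla : l < a) : g' ≤ 0 := by
  have h := hmin.localize.hasFDerivWithinAt_nonneg hg.hasFDerivWithinAt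
    (sub_mem_posTangentConeAt_of_segment_subset
      ((segment_symm ℝ a l ▸ segment_eq_Icc hla.le).trans_subset (Icc_subset_Icc le_rfl ha.2)))
  simp only [ContinuousLinearMap.toSpanSingleton_apply, smul_eq_mul] at h
  exact nonpos_of_mul_nonneg_right h (sub_neg.2 hla)

theorem sub_le_sq_div_of_le_deriv {D : Set ℝ} (hD : Convex ℝ D)
    (hg : ∀ t ∈ D, HasDerivWithinAt g (v t) D t) (hv : ∀ t ∈ D, HasDerivWithinAt v (w t) D t)
    {lam : ℝ} (hlam : 0 < lam) (hw : ∀ t ∈ D, lam ≤ w t) {x y : ℝ} (hx : x ∈ D) (hy : y ∈ D) :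
    g x - g y ≤ v x ^ 2 / (2 * lam) := by
  have hψ : MonotoneOn (fun t => v t - lam * t) D :=
    monotoneOn_of_hasDerivWithinAt_nonneg hD
      (fun t ht => (hv t ht).continuousWithinAt.sub (continuousWithinAt_id.const_mul lam))
      (fun t ht => ((hv t (interior_subset ht)).sub
        ((hasDerivWithinAt_id t D).const_mul lam)).mono interior_subset)
      (fun t ht => by simpa only [mul_one, sub_nonneg] using hw t (interior_subset ht))
  set φ := fun t => g t - v x * t - lam / 2 * (t - x) ^ 2
  have hφ : ∀ t ∈ D, HasDerivWithinAt φ (v t - lam * t - (v x - lam * x)) D t := fun t ht =>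
    (((hg t ht).sub ((hasDerivWithinAt_id t D).const_mul (v x))).sub
      ((((hasDerivWithinAt_id t D).sub_const x).pow 2).const_mul (lam / 2))).congr_deriv
      (by simp only [mul_one, Nat.cast_ofNat, id_eq, Nat.add_one_sub_one, pow_one]; ring)
  have hφc : ContinuousOn φ D := fun t ht => (hφ t ht).continuousWithinAt
  have hleft : AntitoneOn φ (D ∩ Iic x) :=
    antitoneOn_of_hasDerivWithinAt_nonpos (hD.inter (convex_Iic x)) (hφc.mono inter_subset_left)
      (fun t ht => (hφ t (inter_subset_left (interior_subset ht))).mono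
        (interior_subset.trans inter_subset_left))
      (fun t ht => sub_nonpos.2 (hψ (interior_subset ht).1 hx (interior_subset ht).2))
  have hright : MonotoneOn φ (D ∩ Ici x) :=
    monotoneOn_of_hasDerivWithinAt_nonneg (hD.inter (convex_Ici x)) (hφc.mono inter_subset_left)
      (fun t ht => (hφ t (inter_subset_left (interior_subset ht))).mono
        (interior_subset.trans inter_subset_left))
      (fun t ht => sub_nonneg.2 (hψ hx (interior_subset ht).1 (interior_subset ht).2))
  have hxy : φ x ≤ φ y := by
    rcases le_total y x with hyx | hxy
    · exact hleft ⟨hy, hyx⟩ ⟨hx, self_mem_Iic⟩ hyx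
    · exact hright ⟨hx, self_mem_Ici⟩ ⟨hy, hxy⟩ hxy
  simp only [φ] at hxy
  rw [le_div_iff₀ (by positivity)]
  nlinarith [sq_nonneg (v x + lam * (y - x))]

theorem abs_le_of_mem_uIcc_of_isMinOn
    (hg : ∀ t ∈ Icc l u, HasDerivWithinAt g (v t) (Icc l u) t)
    (hv : ∀ t ∈ Icc l u, HasDerivWithinAt v (w t) (Icc l u) t) {ε : ℝ}
    (hcurv : ∀ t ∈ Icc l u, |v t| ≤ ε → 0 < w t) {x m r : ℝ} (hx : x ∈ Icc l u)
    (hvx : |v x| < ε) (hm : m ∈ Icc l u) (hmin : IsMinOn g (Icc l u) m) (hr : r ∈ uIcc x m) :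
    |v r| ≤ ε := by
  -- `v` crosses every level `c ∈ [-ε, ε]` only upwards.
  have hε : 0 < ε := (abs_nonneg _).trans_lt hvx
  have level : ∀ c, |c| ≤ ε → ∀ s t, l ≤ s → s ≤ t → t ≤ u → c ≤ v s → c ≤ v t :=
    fun c hc s t => le_of_le_of_deriv_pos_at_level hv fun t ht h => hcurv t ht (h ▸ hc)
  have hε' : |ε| ≤ ε := (abs_of_pos hε).le
  rw [abs_lt] at hvx
  rw [abs_le]
  rcases le_total m x with hmx | hxm
  · rw [uIcc_of_ge hmx] at hr
    constructor
    · rcases hm.2.lt_or_eq with hmu | rfl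
      · have := level 0 (by simpa using hε.le) m r hm.1 hr.1 (hr.2.trans hx.2)
          (hmin.nonneg_of_hasDerivWithinAt_Icc hm (hg m hm) hmu)
        linarith
      · obtain rfl : r = x := le_antisymm hr.2 (hx.2.trans hr.1)
        linarith
    · by_contra! h
      linarith [level ε hε' r x (hm.1.trans hr.1) hr.2 hx.2 h.le]
  · rw [uIcc_of_le hxm] at hr
    constructor
    · linarith [level (v x) (abs_le.2 ⟨hvx.1.le, hvx.2.le⟩) x r hx.1 hr.1 (hr.2.trans hm.2)
        le_rfl]
    · by_contra! h
      have hxr : x < r := hr.1.lt_of_ne (by rintro rfl; linarith)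
      have := hmin.nonpos_of_hasDerivWithinAt_Icc hm (hg m hm) (hx.1.trans_lt (hxr.trans_le hr.2))
      linarith [level ε hε' r m (hx.1.trans hr.1) hr.2 hm.2 h.le]

theorem sub_le_mul_sq_of_abs_le_imp_le_deriv
    (hg : ∀ t ∈ Icc l u, HasDerivWithinAt g (v t) (Icc l u) t)
    (hv : ∀ t ∈ Icc l u, HasDerivWithinAt v (w t) (Icc l u) t) {ε lam M : ℝ} (hε : 0 < ε)
    (hlam : 0 < lam) (hcurv : ∀ t ∈ Icc l u, |v t| ≤ ε → lam ≤ w t)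
    (hM : ∀ t ∈ Icc l u, |g t| ≤ M) {x y : ℝ} (hx : x ∈ Icc l u) (hy : y ∈ Icc l u) :
    g x - g y ≤ max (1 / (2 * lam)) (2 * M / ε ^ 2) * v x ^ 2 := by
  obtain ⟨m, hm, hmin⟩ := isCompact_Icc.exists_isMinOn ⟨x, hx⟩
    (fun t ht => (hg t ht).continuousWithinAt)
  calc g x - g y ≤ g x - g m := sub_le_sub_left (isMinOn_iff.1 hmin y hy) _
    _ ≤ _ := ?_
  rcases lt_or_ge |v x| ε with hsmall | hlarge
  · have hsub : uIcc x m ⊆ Icc l u := uIcc_subset_Icc hx hm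
    have hseg : ∀ t ∈ uIcc x m, |v t| ≤ ε := fun t ht =>
      abs_le_of_mem_uIcc_of_isMinOn hg hv (fun t ht h => hlam.trans_le (hcurv t ht h)) hx hsmall
        hm hmin ht
    calc g x - g m ≤ v x ^ 2 / (2 * lam) :=
          sub_le_sq_div_of_le_deriv (convex_uIcc x m) (fun t ht => (hg t (hsub ht)).mono hsub)
            (fun t ht => (hv t (hsub ht)).mono hsub) hlam
            (fun t ht => hcurv t (hsub ht) (hseg t ht)) left_mem_uIcc right_mem_uIcc
      _ = 1 / (2 * lam) * v x ^ 2 := by ring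
      _ ≤ _ := by gcongr; exact le_max_left _ _
  · have hM0 : 0 ≤ M := (abs_nonneg _).trans (hM x hx)
    calc g x - g m ≤ 2 * M := by linarith [(abs_le.1 (hM x hx)).2, (abs_le.1 (hM m hm)).1]
      _ ≤ 2 * M / ε ^ 2 * v x ^ 2 := by
          rw [div_mul_eq_mul_div, le_div_iff₀ (by positivity)]
          exact mul_le_mul_of_nonneg_left (sq_le_sq.2 (by rwa [abs_of_pos hε])) (by positivity)
      _ ≤ _ := by gcongr; exact le_max_right _ _

end Interval

theorem HasFDerivWithinAt.hasDerivWithinAt_comp_prodMk_const {𝕜 E : Type*}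
    [NontriviallyNormedField 𝕜] [NormedAddCommGroup E] [NormedSpace 𝕜 E] {G : 𝕜 × 𝕜 → E}
    {G' : 𝕜 × 𝕜 →L[𝕜] E} {s t : Set 𝕜} {x y : 𝕜} (hG : HasFDerivWithinAt G G' (s ×ˢ t) (x, y))
    (hy : y ∈ t) : HasDerivWithinAt (fun x' => G (x', y)) (G' (1, 0)) s x :=
  hG.comp_hasDerivWithinAt x ((hasDerivWithinAt_id x s).prodMk (hasDerivWithinAt_const x s y))
    fun _ hx' => mk_mem_prod hx' hy

theorem derivWithin_derivWithin_eq_of_hasDerivWithinAt {𝕜 F : Type*}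
    [NontriviallyNormedField 𝕜] [NormedAddCommGroup F] [NormedSpace 𝕜 F] {g v w : 𝕜 → F} {s : Set 𝕜}
    (hs : UniqueDiffOn 𝕜 s) (hg : ∀ t ∈ s, HasDerivWithinAt g (v t) s t)
    (hv : ∀ t ∈ s, HasDerivWithinAt v (w t) s t) {x : 𝕜} (hx : x ∈ s) :
    derivWithin (derivWithin g s) s x = w x := by
  rw [derivWithin_congr (fun t ht => (hg t ht).derivWithin (hs t ht))
    ((hg x hx).derivWithin (hs x hx))]
  exact (hv x hx).derivWithin (hs x hx)

theorem IsCompact.exists_pos_forall_abs_le_imp_le {X : Type*} [TopologicalSpace X] {S : Set X}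
    (hS : IsCompact S) {a b : X → ℝ} (ha : ContinuousOn a S) (hb : ContinuousOn b S)
    (hab : ∀ z ∈ S, a z = 0 → 0 < b z) : ∃ ε > 0, ∀ z ∈ S, |a z| ≤ ε → ε ≤ b z := by
  obtain ⟨δ, hδ, hδle⟩ := hS.exists_forall_le' (ha.abs.sup hb) (a := 0) fun z hz => by
    rcases eq_or_ne (a z) 0 with h | h
    · exact lt_max_of_lt_right (hab z hz h)
    · exact lt_max_of_lt_left (abs_pos.2 h)
  refine ⟨δ / 2, half_pos hδ, fun z hz hle => ?_⟩
  rcases le_max_iff.1 (hδle z hz) with h | h <;> linarith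

theorem exists_forall_sub_le_mul_derivWithin_sq (l u : ℝ) (f : ℝ → ℝ → ℝ)
    (hf : ContDiffOn ℝ 2 (fun p : ℝ × ℝ => f p.1 p.2) (Icc l u ×ˢ Icc l u))
    (h1 : ∀ x ∈ Icc l u, ∀ y ∈ Icc l u,
      derivWithin (fun x' => f x' y) (Icc l u) x = 0 →
      0 < derivWithin (fun x' => derivWithin (fun x'' => f x'' y) (Icc l u) x') (Icc l u) x) :
    ∃ C : ℝ, ∀ x ∈ Icc l u, ∀ y ∈ Icc l u, ∀ x' ∈ Icc l u,
      f x y - f x' y ≤ C * derivWithin (fun x' => f x' y) (Icc l u) x ^ 2 := by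
  rcases le_or_gt u l with hul | hlu
  · refine ⟨0, fun x hx y _ x' hx' => ?_⟩
    obtain rfl : x = x' := by linarith [hx.1, hx.2, hx'.1, hx'.2]
    simp
  set S := Icc l u ×ˢ Icc l u
  have hI : UniqueDiffOn ℝ (Icc l u) := uniqueDiffOn_Icc hlu
  have hS : UniqueDiffOn ℝ S := hI.prod hI
  have hDF : ContDiffOn ℝ 1 (fderivWithin ℝ (fun p : ℝ × ℝ => f p.1 p.2) S) S :=
    hf.fderivWithin hS (by norm_num)
  set v := fun z : ℝ × ℝ => fderivWithin ℝ (fun p : ℝ × ℝ => f p.1 p.2) S z (1, 0)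
  set w := fun z : ℝ × ℝ => fderivWithin ℝ (fderivWithin ℝ (fun p : ℝ × ℝ => f p.1 p.2) S) S z
    (1, 0) (1, 0)
  have hv : ∀ y ∈ Icc l u, ∀ x ∈ Icc l u,
      HasDerivWithinAt (fun x' => f x' y) (v (x, y)) (Icc l u) x := fun y hy x hx =>
    (hf.differentiableOn two_ne_zero _ (mk_mem_prod hx hy)).hasFDerivWithinAt
      |>.hasDerivWithinAt_comp_prodMk_const hy
  have hw : ∀ y ∈ Icc l u, ∀ x ∈ Icc l u,
      HasDerivWithinAt (fun x' => v (x', y)) (w (x, y)) (Icc l u) x := fun y hy x hx =>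
    (((hDF.differentiableOn one_ne_zero _ (mk_mem_prod hx hy)).hasFDerivWithinAt
      |>.hasDerivWithinAt_comp_prodMk_const hy).clm_apply
      (hasDerivWithinAt_const _ _ _)).congr_deriv (by simp only [map_zero, add_zero, w])
  obtain ⟨ε, hε, hcurv⟩ := (isCompact_Icc.prod isCompact_Icc).exists_pos_forall_abs_le_imp_le
    (a := v) (b := w) (hDF.continuousOn.clm_apply continuousOn_const)
    (((hDF.fderivWithin (m := 0) hS (by norm_num)).continuousOn.clm_apply
      continuousOn_const).clm_apply continuousOn_const) fun ⟨x, y⟩ ⟨hx, hy⟩ => by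
      have := h1 x hx y hy
      rwa [(hv y hy x hx).derivWithin (hI x hx),
        derivWithin_derivWithin_eq_of_hasDerivWithinAt hI (hv y hy) (hw y hy) hx] at this
  obtain ⟨M, hM⟩ :=
    (isCompact_Icc.prod isCompact_Icc).exists_bound_of_continuousOn hf.continuousOn
  refine ⟨max (1 / (2 * ε)) (2 * M / ε ^ 2), fun x hx y hy x' hx' => ?_⟩
  rw [(hv y hy x hx).derivWithin (hI x hx)]
  exact sub_le_mul_sq_of_abs_le_imp_le_deriv (hv y hy) (hw y hy) hε hε
    (fun t ht => hcurv (t, y) (mk_mem_prod ht hy)) (fun t ht => hM (t, y) (mk_mem_prod ht hy))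
    hx hx'

theorem sub_csInf_image_le {α : Type*} {s : Set α} {g : α → ℝ} {a b : ℝ} (hs : s.Nonempty)
    (h : ∀ x ∈ s, a - g x ≤ b) : a - sInf (g '' s) ≤ b :=
  sub_le_comm.1 <| le_csInf (hs.image g) <| forall_mem_image.2 fun x hx => sub_le_comm.1 (h x hx)

theorem csSup_image_sub_le {α : Type*} {s : Set α} {g : α → ℝ} {a b : ℝ} (hs : s.Nonempty)
    (h : ∀ x ∈ s, g x - a ≤ b) : sSup (g '' s) - a ≤ b :=
  sub_le_iff_le_add.2 <| csSup_le (hs.image g) <| forall_mem_image.2 fun x hx =>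
    sub_le_iff_le_add.1 (h x hx)

/-- Criterion for the two-sided PL condition: if `f` is `C²` on `I² = [l,u]²` and at every
point of `I²` one has `∂ₓf = 0 ⟹ ∂ₓ²f > 0` and `∂_y f = 0 ⟹ ∂_y²f < 0`, then `f`
satisfies the two-sided PL condition on `I²` with some constant `C`. -/
theorem statement_5 (l u : ℝ) (f : ℝ → ℝ → ℝ)
    (hf : ContDiffOn ℝ 2 (fun p : ℝ × ℝ => f p.1 p.2) (Icc l u ×ˢ Icc l u))
    (h1 : ∀ x ∈ Icc l u, ∀ y ∈ Icc l u,
      derivWithin (fun x' => f x' y) (Icc l u) x = 0 →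
      0 < derivWithin (fun x' => derivWithin (fun x'' => f x'' y) (Icc l u) x') (Icc l u) x)
    (h2 : ∀ x ∈ Icc l u, ∀ y ∈ Icc l u,
      derivWithin (fun y' => f x y') (Icc l u) y = 0 →
      derivWithin (fun y' => derivWithin (fun y'' => f x y'') (Icc l u) y') (Icc l u) y < 0) :
    ∃ C : ℝ, ∀ x ∈ Icc l u, ∀ y ∈ Icc l u,
      f x y - sInf ((fun x' => f x' y) '' Icc l u) ≤
        C * (derivWithin (fun x' => f x' y) (Icc l u) x) ^ 2 ∧
      sSup ((fun y' => f x y') '' Icc l u) - f x y ≤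
        C * (derivWithin (fun y' => f x y') (Icc l u) y) ^ 2 := by
  obtain ⟨C₁, hC₁⟩ := exists_forall_sub_le_mul_derivWithin_sq l u f hf h1
  -- The `sSup` half is the `sInf` half for `(x, y) ↦ -f y x`.
  have hf' : ContDiffOn ℝ 2 (fun p : ℝ × ℝ => -f p.2 p.1) (Icc l u ×ˢ Icc l u) :=
    (hf.comp (contDiff_snd.prodMk contDiff_fst).contDiffOn fun _ hp => ⟨hp.2, hp.1⟩).neg
  obtain ⟨C₂, hC₂⟩ := exists_forall_sub_le_mul_derivWithin_sq l u (fun x y => -f y x) hf'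
    fun y hy x hx => by
      simp only [derivWithin.fun_neg, neg_eq_zero, neg_pos]
      exact h2 x hx y hy
  refine ⟨max C₁ C₂, fun x hx y hy => ⟨sub_csInf_image_le ⟨x, hx⟩ fun x' hx' => ?_,
    csSup_image_sub_le ⟨y, hy⟩ fun y' hy' => ?_⟩⟩
  · exact (hC₁ x hx y hy x' hx').trans (by gcongr; exact le_max_left _ _)
  · have := hC₂ y hy x hx y' hy'
    simp only [derivWithin.fun_neg, neg_sq, sub_neg_eq_add, neg_add_eq_sub] at this
    exact this.trans (by gcongr; exact le_max_right _ _)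
end

section
/- Let (M(t))_{t≥0} be a flow line of the vector field v defined for all t ≥ 0, and write ℓ₁(x,y) := x − γy and ℓ₂(x,y) := y + γx. If ℓ₁(M(t)) > 0 and ℓ₂(M(t)) > 0 for every t ≥ 0, then M(t) → (0,0) as t → +∞. -/
open Set Filter

/-- The vector field `v(x,y) = ((γy - x) φ(x² + axy + by²), (y + γx) φ(y² - axy + bx²))`,
with `a = γ + 1` and `b = γ² + γ + 1`. -/
def vf (γ : ℝ) (φ : ℝ → ℝ) (p : ℝ × ℝ) : ℝ × ℝ :=
  ((γ * p.2 - p.1) * φ (p.1 ^ 2 + (γ + 1) * p.1 * p.2 + (γ ^ 2 + γ + 1) * p.2 ^ 2),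
   (p.2 + γ * p.1) * φ (p.2 ^ 2 - (γ + 1) * p.1 * p.2 + (γ ^ 2 + γ + 1) * p.1 ^ 2))

/-! ### Auxiliary definitions and lemmas -/

/-- `ℓ₁(M t) = x - γ y`. -/
def Uf (γ : ℝ) (M : ℝ → ℝ × ℝ) (s : ℝ) : ℝ := (M s).1 - γ * (M s).2

/-- `ℓ₂(M t) = y + γ x`. -/
def Wf (γ : ℝ) (M : ℝ → ℝ × ℝ) (s : ℝ) : ℝ := (M s).2 + γ * (M s).1

/-- First quadratic form. -/
def Q1f (γ : ℝ) (M : ℝ → ℝ × ℝ) (s : ℝ) : ℝ :=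
  (M s).1 ^ 2 + (γ + 1) * (M s).1 * (M s).2 + (γ ^ 2 + γ + 1) * (M s).2 ^ 2

/-- Second quadratic form. -/
def Q2f (γ : ℝ) (M : ℝ → ℝ × ℝ) (s : ℝ) : ℝ :=
  (M s).2 ^ 2 - (γ + 1) * (M s).1 * (M s).2 + (γ ^ 2 + γ + 1) * (M s).1 ^ 2

lemma gamma_pos {γ : ℝ} (hγ : γ ^ 3 + γ ^ 2 + γ - 1 / 3 = 0) : 0 < γ := by
  nlinarith [sq_nonneg γ, sq_nonneg (γ+1), sq_nonneg (γ-1)]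

lemma gamma_lt {γ : ℝ} (hγ : γ ^ 3 + γ ^ 2 + γ - 1 / 3 = 0) : γ ≤ 1/2 := by
  nlinarith [sq_nonneg γ, sq_nonneg (γ+1), sq_nonneg (γ - 1/2)]

lemma Q1_nonneg (γ X Y : ℝ) (h0 : 0 < γ) :
    0 ≤ X ^ 2 + (γ + 1) * X * Y + (γ ^ 2 + γ + 1) * Y ^ 2 := by
  nlinarith [sq_nonneg (2*X + (γ+1)*Y), sq_nonneg Y, sq_nonneg γ]

lemma Q2_nonneg (γ X Y : ℝ) (h0 : 0 < γ) :
    0 ≤ Y ^ 2 - (γ + 1) * X * Y + (γ ^ 2 + γ + 1) * X ^ 2 := by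
  nlinarith [sq_nonneg (2*Y - (γ+1)*X), sq_nonneg X, sq_nonneg γ]

lemma Q2_lower (γ X Y : ℝ) (h0 : 0 < γ) (h1 : γ ≤ 1/2) :
    (Y + γ*X)^2 / 5 ≤ Y ^ 2 - (γ + 1) * X * Y + (γ ^ 2 + γ + 1) * X ^ 2 := by
  nlinarith [sq_nonneg (3*Y - 2*(γ+1)*X), sq_nonneg (X - γ*Y), sq_nonneg X, sq_nonneg Y,
    sq_nonneg γ, sq_nonneg (X+Y), sq_nonneg (X-Y)]

lemma Q1_upper (γ X Y : ℝ) (h0 : 0 < γ) (h1 : γ ≤ 1/2) :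
    X ^ 2 + (γ + 1) * X * Y + (γ ^ 2 + γ + 1) * Y ^ 2 ≤ 3 * ((X - γ*Y)^2 + (Y + γ*X)^2) := by
  nlinarith [sq_nonneg (X+Y), sq_nonneg (X-Y), sq_nonneg X, sq_nonneg Y, sq_nonneg γ,
    mul_pos h0 h0]

lemma caseA_abs (γ X Y : ℝ) (h0 : 0 < γ) (h1 : γ ≤ 1/2) (hu : 0 < X - γ*Y) (hw : 0 < Y + γ*X)
    (hA : Y + γ*X ≤ γ * (X - γ*Y)) : |X| ≤ X - γ*Y ∧ |Y| ≤ X - γ*Y := by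
  have h2 : Y * (1 + γ^2) ≤ 0 := by nlinarith
  have hg2 : (0:ℝ) < 1 + γ^2 := by positivity
  have hY : Y ≤ 0 := by
    by_contra h; push_neg at h
    exact absurd h2 (not_le.mpr (mul_pos h hg2))
  have hX : 0 < X := by
    by_contra h; push_neg at h
    nlinarith [mul_nonpos_of_nonneg_of_nonpos h0.le h]
  refine ⟨?_, ?_⟩
  · rw [abs_le]
    constructor <;> nlinarith [mul_pos h0 hX, mul_nonpos_of_nonneg_of_nonpos h0.le hY]
  · rw [abs_le]
    refine ⟨?_, by nlinarith [mul_nonpos_of_nonneg_of_nonpos h0.le hY]⟩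
    nlinarith [mul_nonneg (by linarith : (0:ℝ) ≤ 1 - γ) hw.le,
      mul_pos (show (0:ℝ) < 1 - γ + γ^2 by nlinarith) hX]

lemma key_ineq (γ u₀ u w A B : ℝ) (h0 : 0 < γ) (hu0 : 0 < u₀)
    (hu : 0 < u) (hub : u ≤ u₀) (hw0 : 0 < w)
    (hA1 : 1 ≤ A) (hAle : A ≤ 6*(u₀^2 + w^2) + 2)
    (hB : w^2/5 ≤ B)
    (hW : 5*(1 + 6*γ*u₀ + (6*u₀^2+2)*γ*u₀) ≤ w) :
    w^2 ≤ w*B - γ*(u*A) := by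
  have hc : 0 ≤ γ*u₀ := by positivity
  have hW5 : (5:ℝ) ≤ w := by nlinarith
  have hw1 : (1:ℝ) ≤ w^2 := by nlinarith
  have h4 : w^3/5 ≤ w * B := by
    calc w^3/5 = w * (w^2/5) := by ring
      _ ≤ w * B := mul_le_mul_of_nonneg_left hB hw0.le
  have h5 : γ*(u*A) ≤ γ*u₀*(6*u₀^2 + 6*w^2 + 2) := by
    have hA0 : (0:ℝ) < A := by linarith
    have h51 : u*A ≤ u₀*A := mul_le_mul_of_nonneg_right hub hA0.le
    have h52 : u₀*A ≤ u₀*(6*u₀^2 + 6*w^2 + 2) :=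
      mul_le_mul_of_nonneg_left (by linarith) hu0.le
    calc γ*(u*A) ≤ γ*(u₀*(6*u₀^2 + 6*w^2 + 2)) :=
          mul_le_mul_of_nonneg_left (h51.trans h52) h0.le
      _ = γ*u₀*(6*u₀^2 + 6*w^2 + 2) := by ring
  have h6 : w^2 + γ*u₀*(6*u₀^2 + 6*w^2 + 2) ≤ w^3/5 := by
    have e1 : (1 + 6*γ*u₀ + (6*u₀^2+2)*γ*u₀) * w^2 ≤ w^3/5 := by
      calc (1 + 6*γ*u₀ + (6*u₀^2+2)*γ*u₀) * w^2
          = (5*(1 + 6*γ*u₀ + (6*u₀^2+2)*γ*u₀)) * (w^2/5) := by ring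
        _ ≤ w * (w^2/5) := mul_le_mul_of_nonneg_right hW (by positivity)
        _ = w^3/5 := by ring
    nlinarith [mul_nonneg hc (by linarith : (0:ℝ) ≤ w^2 - 1),
      mul_nonneg (mul_nonneg hc (sq_nonneg u₀)) (by linarith : (0:ℝ) ≤ w^2 - 1)]
  linarith

lemma monoOn_of_hasDeriv' {a : ℝ} {f : ℝ → ℝ}
    (hf : ∀ t ∈ Ici a, ∃ d : ℝ, HasDerivWithinAt f d (Ici a) t ∧ 0 ≤ d) :
    MonotoneOn f (Ici a) := by
  apply monotoneOn_of_deriv_nonneg (convex_Ici a)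
    (fun t ht => (hf t ht).choose_spec.1.continuousWithinAt)
  · intro t ht
    rw [interior_Ici] at ht
    exact (((hf t (show a ≤ t from le_of_lt ht)).choose_spec.1.hasDerivAt
      (Ici_mem_nhds ht)).differentiableAt).differentiableWithinAt
  · intro t ht
    rw [interior_Ici] at ht
    rw [((hf t (show a ≤ t from le_of_lt ht)).choose_spec.1.hasDerivAt (Ici_mem_nhds ht)).deriv]
    exact (hf t (show a ≤ t from le_of_lt ht)).choose_spec.2

lemma antiOn_of_hasDeriv' {a : ℝ} {f : ℝ → ℝ}
    (hf : ∀ t ∈ Ici a, ∃ d : ℝ, HasDerivWithinAt f d (Ici a) t ∧ d ≤ 0) :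
    AntitoneOn f (Ici a) := by
  apply antitoneOn_of_deriv_nonpos (convex_Ici a)
    (fun t ht => (hf t ht).choose_spec.1.continuousWithinAt)
  · intro t ht
    rw [interior_Ici] at ht
    exact (((hf t (show a ≤ t from le_of_lt ht)).choose_spec.1.hasDerivAt
      (Ici_mem_nhds ht)).differentiableAt).differentiableWithinAt
  · intro t ht
    rw [interior_Ici] at ht
    rw [((hf t (show a ≤ t from le_of_lt ht)).choose_spec.1.hasDerivAt (Ici_mem_nhds ht)).deriv]
    exact (hf t (show a ≤ t from le_of_lt ht)).choose_spec.2

/-- If a flow line of `v`, defined for all `t ≥ 0`, satisfies `ℓ₁(M(t)) > 0` and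
`ℓ₂(M(t)) > 0` for all `t ≥ 0` (where `ℓ₁ = x - γy` and `ℓ₂ = y + γx`), then
`M(t) → (0,0)` as `t → +∞`. -/
theorem statement_12 (γ : ℝ) (hγ : γ ^ 3 + γ ^ 2 + γ - 1 / 3 = 0)
    (φ : ℝ → ℝ) (hφsmooth : ContDiffOn ℝ (⊤ : ℕ∞) φ (Ici 0))
    (hφmono : MonotoneOn φ (Ici 0))
    (hφone : ∀ t ∈ Ici (0 : ℝ), 1 ≤ φ t)
    (hφlow : ∀ t ∈ Icc (0 : ℝ) (1 / 2), φ t = 1)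
    (hφhigh : ∀ t ∈ Ici (1 : ℝ), φ t = 2 * t)
    (M : ℝ → ℝ × ℝ)
    (hflow : ∀ t ∈ Ici (0 : ℝ), HasDerivWithinAt M (vf γ φ (M t)) (Ici 0) t)
    (hQ : ∀ t ∈ Ici (0 : ℝ),
      0 < (M t).1 - γ * (M t).2 ∧ 0 < (M t).2 + γ * (M t).1) :
    Tendsto M atTop (nhds (0, 0)) := by
  have hγ0 : 0 < γ := gamma_pos hγ
  have hγ1 : γ ≤ 1/2 := gamma_lt hγ
  -- positivity of the linear forms
  have hupos : ∀ t ∈ Ici (0:ℝ), 0 < Uf γ M t := fun t ht => (hQ t ht).1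
  have hwpos : ∀ t ∈ Ici (0:ℝ), 0 < Wf γ M t := fun t ht => (hQ t ht).2
  -- nonnegativity of the quadratic forms and lower bounds on φ
  have hQ1nn : ∀ t : ℝ, 0 ≤ Q1f γ M t := fun t => Q1_nonneg γ (M t).1 (M t).2 hγ0
  have hQ2nn : ∀ t : ℝ, 0 ≤ Q2f γ M t := fun t => Q2_nonneg γ (M t).1 (M t).2 hγ0
  have hφ1 : ∀ t : ℝ, 1 ≤ φ (Q1f γ M t) := fun t => hφone _ (hQ1nn t)
  have hφ2 : ∀ t : ℝ, 1 ≤ φ (Q2f γ M t) := fun t => hφone _ (hQ2nn t)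
  have hφub : ∀ s : ℝ, 0 ≤ s → φ s ≤ 2*s + 2 := by
    intro s hs
    rcases le_or_gt s 1 with h | h
    · have h2 := hφmono hs (by norm_num : (1:ℝ) ∈ Ici (0:ℝ)) h
      rw [hφhigh 1 self_mem_Ici] at h2; linarith
    · rw [hφhigh s h.le]; linarith
  have hφge : ∀ s : ℝ, 0 ≤ s → s ≤ φ s := by
    intro s hs
    rcases le_or_gt s 1 with h | h
    · exact h.trans (hφone s hs)
    · rw [hφhigh s h.le]; linarith
  -- derivatives of the components
  have hx' : ∀ t ∈ Ici (0:ℝ), HasDerivWithinAt (fun s => (M s).1)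
      ((γ * (M t).2 - (M t).1) * φ (Q1f γ M t)) (Ici 0) t := by
    intro t ht
    exact
      (ContinuousLinearMap.fst ℝ ℝ ℝ).hasFDerivAt.comp_hasDerivWithinAt t (hflow t ht)
  have hy' : ∀ t ∈ Ici (0:ℝ), HasDerivWithinAt (fun s => (M s).2)
      ((Wf γ M t) * φ (Q2f γ M t)) (Ici 0) t := by
    intro t ht
    exact
      (ContinuousLinearMap.snd ℝ ℝ ℝ).hasFDerivAt.comp_hasDerivWithinAt t (hflow t ht)
  have hU' : ∀ t ∈ Ici (0:ℝ), HasDerivWithinAt (Uf γ M)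
      (-(Uf γ M t * φ (Q1f γ M t)) - γ * (Wf γ M t * φ (Q2f γ M t))) (Ici 0) t := by
    intro t ht
    have h := (hx' t ht).sub ((hy' t ht).const_mul γ)
    have he : (γ * (M t).2 - (M t).1) * φ (Q1f γ M t) - γ * ((Wf γ M t) * φ (Q2f γ M t))
        = -(Uf γ M t * φ (Q1f γ M t)) - γ * (Wf γ M t * φ (Q2f γ M t)) := by
      simp only [Uf, Wf]; ring
    rw [← he]
    exact h
  have hW' : ∀ t ∈ Ici (0:ℝ), HasDerivWithinAt (Wf γ M)
      (Wf γ M t * φ (Q2f γ M t) - γ * (Uf γ M t * φ (Q1f γ M t))) (Ici 0) t := by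
    intro t ht
    have h := (hy' t ht).add ((hx' t ht).const_mul γ)
    have he : (Wf γ M t) * φ (Q2f γ M t) + γ * ((γ * (M t).2 - (M t).1) * φ (Q1f γ M t))
        = Wf γ M t * φ (Q2f γ M t) - γ * (Uf γ M t * φ (Q1f γ M t)) := by
      simp only [Uf, Wf]; ring
    rw [← he]
    exact h
  by_cases hcase : ∀ t ∈ Ici (0:ℝ), Wf γ M t ≤ γ * Uf γ M t
  · -- Case A : trajectory squeezed, `u` decays exponentially
    have hE : AntitoneOn (fun s => Uf γ M s * Real.exp s) (Ici 0) := by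
      apply antiOn_of_hasDeriv'
      intro t ht
      refine ⟨_, (hU' t ht).mul (Real.hasDerivAt_exp t).hasDerivWithinAt, ?_⟩
      have h1 : Uf γ M t ≤ Uf γ M t * φ (Q1f γ M t) :=
        le_mul_of_one_le_right (hupos t ht).le (hφ1 t)
      have h2 : 0 ≤ γ * (Wf γ M t * φ (Q2f γ M t)) :=
        mul_nonneg hγ0.le (mul_nonneg (hwpos t ht).le (by linarith [hφ2 t]))
      have h3 : -(Uf γ M t * φ (Q1f γ M t)) - γ * (Wf γ M t * φ (Q2f γ M t)) + Uf γ M t ≤ 0 := by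
        linarith
      nlinarith [Real.exp_pos t, mul_nonpos_of_nonpos_of_nonneg h3 (Real.exp_pos t).le]
    have hbound : ∀ t ∈ Ici (0:ℝ), Uf γ M t ≤ Uf γ M 0 * Real.exp (-t) := by
      intro t ht
      have h : Uf γ M t * Real.exp t ≤ Uf γ M 0 * Real.exp 0 := hE self_mem_Ici ht ht
      rw [Real.exp_zero, mul_one] at h
      rw [Real.exp_neg, ← div_eq_mul_inv, le_div_iff₀ (Real.exp_pos t)]
      exact h
    have habs : ∀ t ∈ Ici (0:ℝ), |(M t).1| ≤ Uf γ M t ∧ |(M t).2| ≤ Uf γ M t := by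
      intro t ht
      exact caseA_abs γ (M t).1 (M t).2 hγ0 hγ1 (hupos t ht) (hwpos t ht) (hcase t ht)
    have htend : Tendsto (fun t : ℝ => Uf γ M 0 * Real.exp (-t)) atTop (nhds 0) := by
      simpa using (Real.tendsto_exp_neg_atTop_nhds_zero.const_mul (Uf γ M 0))
    have hx0 : Tendsto (fun t => (M t).1) atTop (nhds 0) := by
      apply squeeze_zero_norm' ?_ htend
      filter_upwards [eventually_ge_atTop (0:ℝ)] with t ht
      rw [Real.norm_eq_abs]
      exact ((habs t ht).1).trans (hbound t ht)
    have hy0 : Tendsto (fun t => (M t).2) atTop (nhds 0) := by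
      apply squeeze_zero_norm' ?_ htend
      filter_upwards [eventually_ge_atTop (0:ℝ)] with t ht
      rw [Real.norm_eq_abs]
      exact ((habs t ht).2).trans (hbound t ht)
    exact hx0.prodMk_nhds hy0
  · -- Case B : contradiction with global existence
    exfalso
    push_neg at hcase
    obtain ⟨t₀, ht₀, hV0⟩ := hcase
    have ht₀0 : (0:ℝ) ≤ t₀ := ht₀
    have hu00 : 0 < Uf γ M 0 := hupos 0 self_mem_Ici
    -- u is bounded by its initial value
    have hUanti : AntitoneOn (Uf γ M) (Ici 0) := by
      apply antiOn_of_hasDeriv'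
      intro t ht
      refine ⟨_, hU' t ht, ?_⟩
      have h1 : 0 ≤ Uf γ M t * φ (Q1f γ M t) :=
        mul_nonneg (hupos t ht).le (by linarith [hφ1 t])
      have h2 : 0 ≤ γ * (Wf γ M t * φ (Q2f γ M t)) :=
        mul_nonneg hγ0.le (mul_nonneg (hwpos t ht).le (by linarith [hφ2 t]))
      linarith
    have hub : ∀ t ∈ Ici (0:ℝ), Uf γ M t ≤ Uf γ M 0 := fun t ht =>
      hUanti self_mem_Ici ht ht
    -- V = w - γu grows at least exponentially
    have hVd : ∀ t ∈ Ici (0:ℝ), HasDerivWithinAt (fun s => Wf γ M s - γ * Uf γ M s)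
        ((1+γ^2) * (Wf γ M t * φ (Q2f γ M t))) (Ici 0) t := by
      intro t ht
      have h := (hW' t ht).sub ((hU' t ht).const_mul γ)
      have he : Wf γ M t * φ (Q2f γ M t) - γ * (Uf γ M t * φ (Q1f γ M t))
          - γ * (-(Uf γ M t * φ (Q1f γ M t)) - γ * (Wf γ M t * φ (Q2f γ M t)))
          = (1+γ^2) * (Wf γ M t * φ (Q2f γ M t)) := by ring
      rw [← he]; exact h
    have hk : MonotoneOn (fun s => (Wf γ M s - γ * Uf γ M s) * Real.exp (-s)) (Ici 0) := by
      apply monoOn_of_hasDeriv'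
      intro t ht
      refine ⟨_, (hVd t ht).mul (((hasDerivAt_neg t).exp).hasDerivWithinAt), ?_⟩
      have h1 : Wf γ M t - γ * Uf γ M t ≤ Wf γ M t := by
        nlinarith [hupos t ht]
      have h2 : Wf γ M t ≤ (1+γ^2) * (Wf γ M t * φ (Q2f γ M t)) := by
        nlinarith [hwpos t ht, hφ2 t, sq_nonneg γ,
          mul_le_mul_of_nonneg_left (hφ2 t) (hwpos t ht).le,
          mul_nonneg (sq_nonneg γ) (mul_nonneg (hwpos t ht).le
            (by linarith [hφ2 t] : (0:ℝ) ≤ φ (Q2f γ M t)))]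
      nlinarith [Real.exp_pos (-t),
        mul_nonneg (by linarith : (0:ℝ) ≤ (1+γ^2) * (Wf γ M t * φ (Q2f γ M t))
          - (Wf γ M t - γ * Uf γ M t)) (Real.exp_pos (-t)).le]
    have hc0 : 0 < Wf γ M t₀ - γ * Uf γ M t₀ := by linarith
    have hgrow : ∀ t, t₀ ≤ t →
        (Wf γ M t₀ - γ * Uf γ M t₀) * Real.exp (t - t₀) ≤ Wf γ M t - γ * Uf γ M t := by
      intro t h1
      have ht0 : (0:ℝ) ≤ t := le_trans ht₀0 h1
      have h := hk ht₀ ht0 h1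
      have h2 := mul_le_mul_of_nonneg_right h (Real.exp_pos t).le
      have e1 : (Wf γ M t - γ * Uf γ M t) * Real.exp (-t) * Real.exp t
          = Wf γ M t - γ * Uf γ M t := by
        rw [mul_assoc, ← Real.exp_add]; simp
      have e2 : (Wf γ M t₀ - γ * Uf γ M t₀) * Real.exp (-t₀) * Real.exp t
          = (Wf γ M t₀ - γ * Uf γ M t₀) * Real.exp (t - t₀) := by
        rw [mul_assoc, ← Real.exp_add, show -t₀ + t = t - t₀ from by ring]
      rw [e1, e2] at h2
      exact h2
    -- the threshold
    set u0 : ℝ := Uf γ M 0 with hu0def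
    set W1 : ℝ := 5*(1 + 6*γ*u0 + (6*u0^2+2)*γ*u0) with hW1def
    have hW1pos : 0 < W1 := by
      have h1 : 0 < γ * u0 := mul_pos hγ0 hu00
      have h2 : 0 ≤ (6*u0^2+2)*γ*u0 := by positivity
      rw [hW1def]; nlinarith
    set c0 : ℝ := Wf γ M t₀ - γ * Uf γ M t₀ with hc0def
    set t₁ : ℝ := t₀ + max 0 (Real.log (W1 / c0)) with ht₁def
    have ht₁t₀ : t₀ ≤ t₁ := by rw [ht₁def]; linarith [le_max_left (0:ℝ) (Real.log (W1 / c0))]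
    have ht₁0 : (0:ℝ) ≤ t₁ := le_trans ht₀0 ht₁t₀
    have hWlarge : ∀ t, t₁ ≤ t → W1 ≤ Wf γ M t := by
      intro t ht
      have h1 : t₀ ≤ t := le_trans ht₁t₀ ht
      have ht0 : (0:ℝ) ≤ t := le_trans ht₁0 ht
      have h2 := hgrow t h1
      have h3 : Real.log (W1 / c0) ≤ t - t₀ := by
        have := le_max_right (0:ℝ) (Real.log (W1 / c0))
        rw [ht₁def] at ht; linarith
      have h4 : W1 / c0 ≤ Real.exp (t - t₀) := by
        calc W1 / c0 = Real.exp (Real.log (W1 / c0)) :=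
              (Real.exp_log (by positivity)).symm
          _ ≤ _ := Real.exp_le_exp.mpr h3
      have h5 : c0 * (W1 / c0) ≤ c0 * Real.exp (t - t₀) :=
        mul_le_mul_of_nonneg_left h4 hc0.le
      have h6 : c0 * (W1 / c0) = W1 := by field_simp
      have h7 : 0 < γ * Uf γ M t := mul_pos hγ0 (hupos t ht0)
      calc W1 = c0 * (W1 / c0) := h6.symm
        _ ≤ c0 * Real.exp (t - t₀) := h5
        _ ≤ Wf γ M t - γ * Uf γ M t := h2
        _ ≤ Wf γ M t := by linarith
    -- on [t₁, ∞), w' ≥ w², so 1/w + t is decreasing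
    have hkey : ∀ t, t₁ ≤ t → (Wf γ M t)^2
        ≤ Wf γ M t * φ (Q2f γ M t) - γ * (Uf γ M t * φ (Q1f γ M t)) := by
      intro t ht
      have ht0 : (0:ℝ) ≤ t := le_trans ht₁0 ht
      have hAle : φ (Q1f γ M t) ≤ 6*(u0^2 + (Wf γ M t)^2) + 2 := by
        have h1 := hφub (Q1f γ M t) (hQ1nn t)
        have h2 : Q1f γ M t ≤ 3 * ((Uf γ M t)^2 + (Wf γ M t)^2) :=
          Q1_upper γ (M t).1 (M t).2 hγ0 hγ1
        have h3 : (Uf γ M t)^2 ≤ u0^2 := by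
          nlinarith [hupos t ht0, hub t ht0]
        linarith
      have hB : (Wf γ M t)^2/5 ≤ φ (Q2f γ M t) := by
        have h1 : (Wf γ M t)^2/5 ≤ Q2f γ M t := Q2_lower γ (M t).1 (M t).2 hγ0 hγ1
        exact h1.trans (hφge _ (hQ2nn t))
      exact key_ineq γ u0 (Uf γ M t) (Wf γ M t) (φ (Q1f γ M t)) (φ (Q2f γ M t))
        hγ0 hu00 (hupos t ht0) (hub t ht0) (hwpos t ht0) (hφ1 t) hAle hB
        (hWlarge t ht)
    have hanti : AntitoneOn (fun s => (Wf γ M s)⁻¹ + s) (Ici t₁) := by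
      apply antiOn_of_hasDeriv'
      intro t ht
      have ht' : t ∈ Ici t₁ := ht
      have ht0 : (0:ℝ) ≤ t := le_trans ht₁0 ht'
      have hwt : 0 < Wf γ M t := hwpos t ht0
      have hd : HasDerivWithinAt (Wf γ M)
          (Wf γ M t * φ (Q2f γ M t) - γ * (Uf γ M t * φ (Q1f γ M t))) (Ici t₁) t :=
        (hW' t ht0).mono (Ici_subset_Ici.mpr ht₁0)
      refine ⟨_, (hd.inv hwt.ne').add (hasDerivAt_id' t).hasDerivWithinAt, ?_⟩
      have hk2 := hkey t ht'
      have h1 : -(Wf γ M t * φ (Q2f γ M t) - γ * (Uf γ M t * φ (Q1f γ M t)))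
          / Wf γ M t ^ 2 ≤ -1 := by
        rw [div_le_iff₀ (by positivity)]
        linarith
      linarith
    have hwt₁ : 0 < Wf γ M t₁ := hwpos t₁ ht₁0
    have hinv : 0 < (Wf γ M t₁)⁻¹ := inv_pos.mpr hwt₁
    set T : ℝ := t₁ + (Wf γ M t₁)⁻¹ + 1 with hTdef
    have hT : t₁ ≤ T := by rw [hTdef]; linarith
    have hhT := hanti self_mem_Ici hT hT
    have hwT : 0 < Wf γ M T := hwpos T (le_trans ht₁0 hT)
    have hinvT : 0 < (Wf γ M T)⁻¹ := inv_pos.mpr hwT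
    simp only at hhT
    rw [hTdef] at hhT
    linarith
end

section
/- Let R < ∞ be such that v(x,y) = 2(−x³ − x²y − xy² + y³/3, y³ − xy² + x²y + x³/3) for all (x,y) with x² + y² ≥ R². Let f : ℝ² → ℝ be a C¹ function whose gradient is orthogonal to v at every point, i.e. ∂_x f(z)·v₁(z) + ∂_y f(z)·v₂(z) = 0 for all z ∈ ℝ². Then for any solution (z(t))_{t∈I} of the gradient descent-ascent flow z'(t) = (−∂_x f(z(t)), ∂_y f(z(t))) that satisfies |z(t)| ≥ R for all t ∈ I, the quantity g̃(z(t)) := 3x(t)⁴ + 4x(t)³y(t) + 6x(t)²y(t)² − 4x(t)y(t)³ + 3y(t)⁴ is constant in t. -/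
open Set Filter

/-- The quartic `g̃(x,y) = 3x⁴ + 4x³y + 6x²y² - 4xy³ + 3y⁴`. -/
noncomputable def gtil (p : ℝ × ℝ) : ℝ :=
  3 * p.1 ^ 4 + 4 * p.1 ^ 3 * p.2 + 6 * p.1 ^ 2 * p.2 ^ 2 - 4 * p.1 * p.2 ^ 3 + 3 * p.2 ^ 4

/-- Suppose `v` agrees with the explicit cubic field outside the ball of radius `R`, and let
`f` be a `C¹` function whose gradient is orthogonal to `v` everywhere. Then along any GDA
trajectory `z` for `f` that stays outside the ball of radius `R`, the quantity `g̃(z(t))` is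
constant. -/
theorem statement_16 (γ : ℝ) (hγ : γ ^ 3 + γ ^ 2 + γ - 1 / 3 = 0)
    (φ : ℝ → ℝ) (hφsmooth : ContDiffOn ℝ (⊤ : ℕ∞) φ (Ici 0))
    (hφmono : MonotoneOn φ (Ici 0))
    (hφone : ∀ t ∈ Ici (0 : ℝ), 1 ≤ φ t)
    (hφlow : ∀ t ∈ Icc (0 : ℝ) (1 / 2), φ t = 1)
    (hφhigh : ∀ t ∈ Ici (1 : ℝ), φ t = 2 * t)
    (R : ℝ)
    (hR : ∀ x y : ℝ, R ^ 2 ≤ x ^ 2 + y ^ 2 →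
      vf γ φ (x, y) =
        (2 * (-x ^ 3 - x ^ 2 * y - x * y ^ 2 + y ^ 3 / 3),
         2 * (y ^ 3 - x * y ^ 2 + x ^ 2 * y + x ^ 3 / 3)))
    (f : ℝ × ℝ → ℝ) (hf : ContDiff ℝ 1 f)
    (horth : ∀ z : ℝ × ℝ,
      pdx f z * (vf γ φ z).1 + pdy f z * (vf γ φ z).2 = 0)
    (I : Set ℝ) (hI : I.OrdConnected)
    (z : ℝ → ℝ × ℝ)
    (hz : ∀ t ∈ I, HasDerivWithinAt z (-(pdx f (z t)), pdy f (z t)) I t)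
    (hout : ∀ t ∈ I, R ^ 2 ≤ (z t).1 ^ 2 + (z t).2 ^ 2) :
    ∀ s ∈ I, ∀ t ∈ I, gtil (z s) = gtil (z t) := by
  -- Show g̃∘z has zero derivative within I at each point, then use MVT.
  have key : ∀ t ∈ I, HasDerivWithinAt (fun t => gtil (z t)) 0 I t := by
    intro t ht
    have hzt := hz t ht
    have hx : HasDerivWithinAt (fun s => (z s).1) (-(pdx f (z t))) I t := by
      have h := (ContinuousLinearMap.fst ℝ ℝ ℝ).hasFDerivAt.comp_hasDerivWithinAt t hzt
      exact h
    have hy : HasDerivWithinAt (fun s => (z s).2) (pdy f (z t)) I t := by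
      have h := (ContinuousLinearMap.snd ℝ ℝ ℝ).hasFDerivAt.comp_hasDerivWithinAt t hzt
      exact h
    have H := ((((((hx.pow 4).const_mul 3).add
        (((hx.pow 3).const_mul 4).mul hy)).add
        (((hx.pow 2).const_mul 6).mul (hy.pow 2))).sub
        ((hx.const_mul 4).mul (hy.pow 3))).add
        ((hy.pow 4).const_mul 3))
    have horth' := horth (z t)
    rw [show z t = ((z t).1, (z t).2) from rfl, hR (z t).1 (z t).2 (hout t ht)] at horth'
    simp only [gtil]
    refine H.congr_deriv ?_
    simp only [Prod.fst, Prod.snd, Prod.mk.eta, Pi.pow_apply] at horth' ⊢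
    ring_nf
    ring_nf at horth'
    linarith [horth']
  intro s hs t ht
  have hconv : Convex ℝ I := hI.convex
  have h1 := hconv.norm_image_sub_le_of_norm_hasDerivWithin_le
    (C := 0) (f' := fun _ => (0 : ℝ)) key (fun x hx => by simp) hs ht
  have h2 : gtil (z t) - gtil (z s) = 0 := by
    have := norm_le_zero_iff.mp (by simpa using h1)
    exact this
  linarith
end
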